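/- arXiv:2001.05557 — 7 statements merged into one kernel-verified Lean document; each statement's English description precedes it below -/
import Mathlib

section
/- If (a,b,c) is a Markoff triple of reals, then a·b − c > 2 and a² + b² + (a·b − c)² = a·b·(a·b − c); that is, (a, b, ab−c) is again a Markoff triple of reals. -/
/-- If `(a,b,c)` is a Markoff triple of reals (`a,b,c > 2` and `a²+b²+c² = abc`),
then `ab − c > 2` and `a² + b² + (ab−c)² = ab(ab−c)`, i.e. `(a, b, ab−c)` is again
a Markoff triple of reals. -/
theorem markoff_vieta_move (a b c : ℝ) (ha : 2 < a) (hb : 2 < b) (hc : 2 < c)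
    (habc : a ^ 2 + b ^ 2 + c ^ 2 = a * b * c) :
    2 < a * b - c ∧ a ^ 2 + b ^ 2 + (a * b - c) ^ 2 = a * b * (a * b - c) := by
  constructor
  · nlinarith [sq_nonneg (a - b), sq_nonneg (a*b - c - c), mul_pos (sub_pos.2 hc) (sub_pos.2 hc)]
  · nlinarith [habc]
end

section
/- If (a,b,c) is a Markoff triple of reals, then 2·c < a·b + √((a²−4)·(b²−4)); equivalently, 2·arccosh(c/2) < 2·arccosh(a/2) + 2·arccosh(b/2), i.e. the hyperbolic length associated to c is less than the sum of the lengths associated to a and b. -/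
/-- The inverse hyperbolic cosine, `arccosh x = log (x + √(x² − 1))` (for `x ≥ 1`
this is the inverse of `cosh` on `[0, ∞)`). -/
noncomputable def arccosh (x : ℝ) : ℝ := Real.log (x + Real.sqrt (x ^ 2 - 1))

lemma arccosh_half (x : ℝ) (hx : 2 < x) :
    arccosh (x / 2) = Real.log ((x + Real.sqrt (x ^ 2 - 4)) / 2) := by
  have h4 : (0:ℝ) ≤ x ^ 2 - 4 := by nlinarith
  have hs : Real.sqrt ((x / 2) ^ 2 - 1) = Real.sqrt (x ^ 2 - 4) / 2 := by
    rw [show (x / 2) ^ 2 - 1 = (x ^ 2 - 4) / 4 by ring, Real.sqrt_div h4]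
    rw [show (4:ℝ) = 2 ^ 2 by norm_num, Real.sqrt_sq (by norm_num : (0:ℝ) ≤ 2)]
  rw [arccosh, hs]
  ring_nf

/-- If `(a,b,c)` is a Markoff triple of reals, then `2c < ab + √((a²−4)(b²−4))`;
equivalently `2·arccosh(c/2) < 2·arccosh(a/2) + 2·arccosh(b/2)` (the triangle
inequality for the associated hyperbolic lengths). -/
theorem markoff_triangle_inequality (a b c : ℝ) (ha : 2 < a) (hb : 2 < b) (hc : 2 < c)
    (habc : a ^ 2 + b ^ 2 + c ^ 2 = a * b * c) :
    2 * c < a * b + Real.sqrt ((a ^ 2 - 4) * (b ^ 2 - 4)) ∧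
      2 * arccosh (c / 2) < 2 * arccosh (a / 2) + 2 * arccosh (b / 2) := by
  have ha4 : (0:ℝ) ≤ a ^ 2 - 4 := by nlinarith
  have hb4 : (0:ℝ) ≤ b ^ 2 - 4 := by nlinarith
  have hc4 : (0:ℝ) ≤ c ^ 2 - 4 := by nlinarith
  set sa := Real.sqrt (a ^ 2 - 4) with hsa
  set sb := Real.sqrt (b ^ 2 - 4) with hsb
  set sc := Real.sqrt (c ^ 2 - 4) with hsc
  have hsa2 : sa ^ 2 = a ^ 2 - 4 := Real.sq_sqrt ha4
  have hsb2 : sb ^ 2 = b ^ 2 - 4 := Real.sq_sqrt hb4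
  have hsc2 : sc ^ 2 = c ^ 2 - 4 := Real.sq_sqrt hc4
  have hsa0 : 0 ≤ sa := Real.sqrt_nonneg _
  have hsb0 : 0 ≤ sb := Real.sqrt_nonneg _
  have hsc0 : 0 ≤ sc := Real.sqrt_nonneg _
  have hsp : Real.sqrt ((a ^ 2 - 4) * (b ^ 2 - 4)) = sa * sb := Real.sqrt_mul ha4 _
  -- first inequality
  have key : (2 * c - a * b) ^ 2 = (sa * sb) ^ 2 - 16 := by
    have : (sa * sb) ^ 2 = (a ^ 2 - 4) * (b ^ 2 - 4) := by
      rw [mul_pow, hsa2, hsb2]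
    nlinarith [this]
  have hsp0 : 0 ≤ sa * sb := mul_nonneg hsa0 hsb0
  have h1 : 2 * c < a * b + sa * sb := by nlinarith [key, hsp0]
  refine ⟨by rw [hsp]; exact h1, ?_⟩
  -- second inequality on square roots: 2·sc < a·sb + b·sa
  have h2 : 2 * sc < a * sb + b * sa := by
    have hrhs0 : 0 ≤ a * sb + b * sa := by positivity
    nlinarith [h1, hsc2, hsa2, hsb2, mul_pos (by linarith : (0:ℝ) < 2*c) (by nlinarith [hsp0] : (0:ℝ) < a*b + sa*sb), sq_nonneg (2*sc - (a*sb + b*sa))]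
  -- combine via logs
  rw [arccosh_half a ha, arccosh_half b hb, arccosh_half c hc]
  have hA : (0:ℝ) < (a + sa) / 2 := by linarith
  have hB : (0:ℝ) < (b + sb) / 2 := by linarith
  have hC : (0:ℝ) < (c + sc) / 2 := by linarith
  have hmul : (c + sc) / 2 < ((a + sa) / 2) * ((b + sb) / 2) := by
    have hexp : ((a + sa) / 2) * ((b + sb) / 2) = (a * b + a * sb + b * sa + sa * sb) / 4 := by
      ring
    rw [hexp]; linarith
  have hlog : Real.log ((c + sc) / 2) < Real.log ((a + sa) / 2) + Real.log ((b + sb) / 2) := by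
    rw [← Real.log_mul hA.ne' hB.ne']
    exact Real.log_lt_log hC hmul
  linarith
end

section
/- Let (a,b,c) be a Markoff triple of reals, and define the 2×2 real matrices M₀ = [[c/b, a/b²], [a, a − c/b]] and M₁ = [[0, −1/b], [b, b]]. Then det(M₀) = det(M₁) = 1, tr(M₀) = a, tr(M₁) = b, tr(M₀·M₁⁻¹) = c, and tr(M₀·M₁·M₀⁻¹·M₁⁻¹) = −2. -/
/-! For `A, B ∈ SL₂`, Cayley–Hamilton gives `B⁻¹ = tr B • 1 - B`, hence `tr (A B⁻¹) = x y - z` and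
Fricke's identity `tr (A B A⁻¹ B⁻¹) = x² + y² + z² - x y z - 2`, where `x = tr A`, `y = tr B`,
`z = tr (A B)`. For the given matrices `x = a`, `y = b` and `z = a b - c`, the image of `c` under the
Vieta involution of the Markoff equation, so `tr (M₀ M₁⁻¹) = c` and the Markoff equation turns
Fricke's identity into `tr [M₀, M₁] = -2`. -/

open Matrix

namespace Matrix

variable {R : Type*} [CommRing R]

theorem inv_eq_adjugate_of_det_eq_one {n : Type*} [Fintype n] [DecidableEq n] {A : Matrix n n R}
    (hA : A.det = 1) : A⁻¹ = A.adjugate := by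
  rw [inv_def, hA, Ring.inverse_one, one_smul]

theorem trace_mul_adjugate_fin_two (A B : Matrix (Fin 2) (Fin 2) R) :
    trace (A * adjugate B) = trace A * trace B - trace (A * B) := by
  rw [A.eta_fin_two, B.eta_fin_two]
  simp only [adjugate_fin_two_of, mul_fin_two, trace_fin_two_of]
  ring

theorem trace_commutator_adjugate_fin_two (A B : Matrix (Fin 2) (Fin 2) R) :
    trace (A * B * adjugate A * adjugate B) =
      det B * trace A ^ 2 + det A * trace B ^ 2 + trace (A * B) ^ 2
        - trace A * trace B * trace (A * B) - 2 * det A * det B := by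
  rw [A.eta_fin_two, B.eta_fin_two]
  simp only [adjugate_fin_two_of, mul_fin_two, trace_fin_two_of, det_fin_two_of]
  ring

theorem trace_mul_inv_fin_two (A : Matrix (Fin 2) (Fin 2) R) {B : Matrix (Fin 2) (Fin 2) R}
    (hB : det B = 1) : trace (A * B⁻¹) = trace A * trace B - trace (A * B) := by
  rw [inv_eq_adjugate_of_det_eq_one hB, trace_mul_adjugate_fin_two]

theorem trace_commutator_fin_two {A B : Matrix (Fin 2) (Fin 2) R} (hA : det A = 1)
    (hB : det B = 1) :
    trace (A * B * A⁻¹ * B⁻¹) =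
      trace A ^ 2 + trace B ^ 2 + trace (A * B) ^ 2 - trace A * trace B * trace (A * B) - 2 := by
  rw [inv_eq_adjugate_of_det_eq_one hA, inv_eq_adjugate_of_det_eq_one hB,
    trace_commutator_adjugate_fin_two, hA, hB]
  ring

end Matrix

theorem markoff_matrices_general (a b c : ℝ) (hb : 2 < b)
    (habc : a ^ 2 + b ^ 2 + c ^ 2 = a * b * c) :
    det !![c / b, a / b ^ 2; a, a - c / b] = 1 ∧
    det !![(0 : ℝ), -1 / b; b, b] = 1 ∧
    trace !![c / b, a / b ^ 2; a, a - c / b] = a ∧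
    trace !![(0 : ℝ), -1 / b; b, b] = b ∧
    trace (!![c / b, a / b ^ 2; a, a - c / b] * (!![(0 : ℝ), -1 / b; b, b])⁻¹) = c ∧
    trace (!![c / b, a / b ^ 2; a, a - c / b] * !![(0 : ℝ), -1 / b; b, b] *
      (!![c / b, a / b ^ 2; a, a - c / b])⁻¹ * (!![(0 : ℝ), -1 / b; b, b])⁻¹) = -2 := by
  have hb₀ : b ≠ 0 := by positivity
  have hdet₀ : det !![c / b, a / b ^ 2; a, a - c / b] = 1 := by
    rw [det_fin_two_of]
    field_simp
    linear_combination (-1 : ℝ) * habc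
  have hdet₁ : det !![(0 : ℝ), -1 / b; b, b] = 1 := by
    rw [det_fin_two_of]
    field_simp
    ring
  have htr₀ : trace !![c / b, a / b ^ 2; a, a - c / b] = a := by
    rw [trace_fin_two_of]
    ring
  have htr₁ : trace !![(0 : ℝ), -1 / b; b, b] = b := by
    rw [trace_fin_two_of]
    ring
  have htr₀₁ : trace (!![c / b, a / b ^ 2; a, a - c / b] * !![(0 : ℝ), -1 / b; b, b]) =
      a * b - c := by
    rw [mul_fin_two, trace_fin_two_of]
    field_simp
    ring
  refine ⟨hdet₀, hdet₁, htr₀, htr₁, ?_, ?_⟩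
  · rw [trace_mul_inv_fin_two _ hdet₁, htr₀, htr₁, htr₀₁]
    ring
  · rw [trace_commutator_fin_two hdet₀ hdet₁, htr₀, htr₁, htr₀₁]
    linear_combination habc

/-- Let `(a,b,c)` be a Markoff triple of reals and define
`M₀ = [[c/b, a/b²], [a, a − c/b]]` and `M₁ = [[0, −1/b], [b, b]]`. Then
`det M₀ = det M₁ = 1`, `tr M₀ = a`, `tr M₁ = b`, `tr (M₀·M₁⁻¹) = c` and
`tr (M₀·M₁·M₀⁻¹·M₁⁻¹) = −2`. -/
theorem markoff_matrices (a b c : ℝ) (ha : 2 < a) (hb : 2 < b) (hc : 2 < c)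
    (habc : a ^ 2 + b ^ 2 + c ^ 2 = a * b * c) :
    det !![c / b, a / b ^ 2; a, a - c / b] = 1 ∧
    det !![(0 : ℝ), -1 / b; b, b] = 1 ∧
    trace !![c / b, a / b ^ 2; a, a - c / b] = a ∧
    trace !![(0 : ℝ), -1 / b; b, b] = b ∧
    trace (!![c / b, a / b ^ 2; a, a - c / b] * (!![(0 : ℝ), -1 / b; b, b])⁻¹) = c ∧
    trace (!![c / b, a / b ^ 2; a, a - c / b] * !![(0 : ℝ), -1 / b; b, b] *
      (!![c / b, a / b ^ 2; a, a - c / b])⁻¹ * (!![(0 : ℝ), -1 / b; b, b])⁻¹) = -2 :=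
  markoff_matrices_general a b c hb habc
end

section
/- Let (a,b,c) be a Markoff triple of reals, T a trace function for (a,b,c), and F as defined. Then F is strictly convex on the rationals of [0,1]: for all rationals 0 ≤ x < y < z ≤ 1, (F(y) − F(x))·(z − y) < (F(z) − F(y))·(y − x). -/
/-!
Write `L v = traceLength (T v)`. Right multiplication by the generators `S`, `T` of `SL(2, ℤ)` acts
on pairs of columns by Vieta moves, so every unimodular pair `(v, w)` has `T v, T w > 2` and
`(T v, T w, T (v + w))` a Markoff triple. Along a line `m ↦ m • W - P`, `(P, W)` unimodular, the
traces satisfy `t (m + 2) = T W * t (m + 1) - t m`, hence `t m = A λ ^ m + B λ⁻¹ ^ m` with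
`λ + λ⁻¹ = T W` and, by the Markoff relation, `A * B > 1`; this gives `κ L W < L P + L (κ W - P)`,
strict convexity of `F` at consecutive Farey neighbours. Induction on the determinant, following
the continued fraction expansion, spreads this to all triples of rationals.
-/

/-- A vector of `ℤ²` is primitive if its coordinates are coprime. -/
def Primitive (v : ℤ × ℤ) : Prop := IsCoprime v.1 v.2

/-- A trace function for a triple `(a,b,c)` of reals: a function on `ℤ²` satisfying
`T(−v) = T(v)` for primitive `v`, with `T(0,1) = a`, `T(1,1) = b`, `T(1,0) = c`, and
`T(v+w) = T(v)·T(w) − T(v−w)` whenever `v, w` are primitive with `det(v,w) = ±1`. -/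
structure IsTraceFunction (a b c : ℝ) (T : ℤ × ℤ → ℝ) : Prop where
  neg_eq : ∀ v : ℤ × ℤ, Primitive v → T (-v) = T v
  map_01 : T (0, 1) = a
  map_11 : T (1, 1) = b
  map_10 : T (1, 0) = c
  add_rule : ∀ v w : ℤ × ℤ, Primitive v → Primitive w →
    (v.1 * w.2 - v.2 * w.1 = 1 ∨ v.1 * w.2 - v.2 * w.1 = -1) →
    T (v + w) = T v * T w - T (v - w)

/-- The hyperbolic length associated to a trace `t`: `l = 2·log((t + √(t²−4))/2)`
(so that `t = 2·cosh(l/2)` when `t > 2`). -/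
noncomputable def traceLength (t : ℝ) : ℝ := 2 * Real.log ((t + Real.sqrt (t ^ 2 - 4)) / 2)

/-- For a rational `r = p/q` in lowest terms (`q ≥ 1`), `F(r) = l(p/q)/q` where
`l(p/q) = 2·log((t+√(t²−4))/2)` and `t = T(p,q)`. -/
noncomputable def Ffun (T : ℤ × ℤ → ℝ) (r : ℚ) : ℝ :=
  traceLength (T (r.num, (r.den : ℤ))) / (r.den : ℝ)

def cross (v w : ℤ × ℤ) : ℤ := v.1 * w.2 - v.2 * w.1

theorem cross_swap (v w : ℤ × ℤ) : cross w v = -cross v w := by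
  simp only [cross]; ring

theorem cross_add_left (v w : ℤ × ℤ) : cross (v + w) w = cross v w := by
  simp only [cross, Prod.fst_add, Prod.snd_add]; ring

theorem cross_add_right (v w : ℤ × ℤ) : cross v (v + w) = cross v w := by
  simp only [cross, Prod.fst_add, Prod.snd_add]; ring

theorem cross_sub_right (v w : ℤ × ℤ) : cross v (w - v) = cross v w := by
  simp only [cross, Prod.fst_sub, Prod.snd_sub]; ring

theorem cross_neg_right (v w : ℤ × ℤ) : cross v (-w) = -cross v w := by
  simp only [cross, Prod.fst_neg, Prod.snd_neg]; ring

theorem cross_smul_sub_left (n : ℤ) (v w : ℤ × ℤ) : cross (n • w - v) w = -cross v w := by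
  simp only [cross, Prod.fst_sub, Prod.snd_sub, Prod.smul_fst, Prod.smul_snd, smul_eq_mul]; ring

theorem cross_smul_add_smul (X Y Z : ℤ × ℤ) :
    cross Y Z • X + cross X Y • Z = cross X Z • Y := by
  ext <;> simp only [cross, Prod.smul_fst, Prod.smul_snd, Prod.fst_add, Prod.snd_add,
    smul_eq_mul] <;> ring

theorem cross_mul_cross (A B C D : ℤ × ℤ) :
    cross A C * cross B D = cross A B * cross C D + cross A D * cross B C := by
  simp only [cross]; ring

theorem Primitive.of_cross_eq_one_left {v w : ℤ × ℤ} (h : cross v w = 1) : Primitive v :=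
  ⟨w.2, -w.1, by simp only [cross] at h; linear_combination h⟩

theorem Primitive.of_cross_eq_one_right {v w : ℤ × ℤ} (h : cross v w = 1) : Primitive w :=
  ⟨-v.2, v.1, by simp only [cross] at h; linear_combination h⟩

theorem Primitive.isCoprime_of_smul_add_smul {s t : ℤ} {v w : ℤ × ℤ}
    (h : Primitive (s • v + t • w)) : IsCoprime s t := by
  obtain ⟨a, b, hab⟩ := h
  refine ⟨a * v.1 + b * v.2, a * w.1 + b * w.2, ?_⟩
  simp only [Prod.fst_add, Prod.snd_add, Prod.smul_fst, Prod.smul_snd, smul_eq_mul] at hab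
  linear_combination hab

theorem Primitive.isUnit_of_smul {d : ℤ} {v : ℤ × ℤ} (h : Primitive (d • v)) : IsUnit d :=
  isCoprime_zero_right.mp (Primitive.isCoprime_of_smul_add_smul (t := 0) (w := 0)
    (by simpa using h))

theorem exists_cross_eq_one_of_one_lt_cross {X Z : ℤ × ℤ} (hX : Primitive X) (hZ : Primitive Z)
    (hXZ : 1 < cross X Z) : ∃ W, cross X W = 1 ∧ 0 < cross W Z ∧ cross W Z < cross X Z := by
  obtain ⟨p, q, hpq⟩ := hX
  set W₀ : ℤ × ℤ := (-q, p)
  set W := W₀ - (cross W₀ Z / cross X Z) • X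
  have hXW : cross X W = 1 := by
    simp only [W, W₀, cross, Prod.fst_sub, Prod.snd_sub, Prod.smul_fst, Prod.smul_snd, smul_eq_mul]
    linear_combination hpq
  have hWZ : cross W Z = cross W₀ Z % cross X Z := by
    rw [Int.emod_def]
    simp only [W, cross, Prod.fst_sub, Prod.snd_sub, Prod.smul_fst, Prod.smul_snd, smul_eq_mul]
    ring
  have hWZ₀ : cross W Z ≠ 0 := by
    intro h
    have hZW := cross_smul_add_smul X W Z
    rw [h, hXW, zero_smul, zero_add, one_smul] at hZW
    have := Int.isUnit_iff.mp (Primitive.isUnit_of_smul (hZW ▸ hZ))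
    omega
  refine ⟨W, hXW, ?_, ?_⟩
  · have := Int.emod_nonneg (cross W₀ Z) (by omega : cross X Z ≠ 0)
    omega
  · rw [hWZ]; exact Int.emod_lt_of_pos _ (by omega)

theorem eq_of_cross_eq_zero {X W Y : ℤ × ℤ} (hY : Primitive Y) (hXW : cross X W = 1)
    (hWY : cross W Y = 0) (hXY : 0 < cross X Y) : Y = W := by
  have hYW := cross_smul_add_smul X W Y
  rw [hWY, hXW, zero_smul, zero_add, one_smul] at hYW
  have := Int.isUnit_iff.mp (Primitive.isUnit_of_smul (hYW ▸ hY))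
  rw [hYW, show cross X Y = 1 by omega, one_smul]

/-- Since `cross X Z • Y = cross Y Z • X + cross X Y • Z`, this says that the `1`-homogeneous
extension of `L` is strictly below its chord at `Y`. -/
def BelowChord (L : ℤ × ℤ → ℝ) (X Y Z : ℤ × ℤ) : Prop :=
  (cross X Z : ℝ) * L Y < cross Y Z * L X + cross X Y * L Z

namespace BelowChord

variable {L : ℤ × ℤ → ℝ} {X Y Z W D : ℤ × ℤ}

theorem of_right (hW : BelowChord L X W Z) (hY : BelowChord L W Y Z) (hXZ : 0 < cross X Z)
    (hYZ : 0 < cross Y Z) (hWZ : 0 < cross W Z) : BelowChord L X Y Z := by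
  have hP : (cross X Y * cross W Z : ℝ) = cross X W * cross Y Z + cross X Z * cross W Y := by
    exact_mod_cast cross_mul_cross X W Y Z
  have hWZ' : (0 : ℝ) < cross W Z := by exact_mod_cast hWZ
  unfold BelowChord at *
  refine lt_of_mul_lt_mul_left ?_ hWZ'.le
  linear_combination (cross X Z : ℝ) * hY + (cross Y Z : ℝ) * hW - L Z * hP

theorem of_left (hY : BelowChord L X Y W) (hW : BelowChord L X W Z) (hXZ : 0 < cross X Z)
    (hXY : 0 < cross X Y) (hXW : 0 < cross X W) : BelowChord L X Y Z := by
  have hP : (cross X W * cross Y Z : ℝ) = cross X Y * cross W Z + cross X Z * cross Y W := by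
    exact_mod_cast cross_mul_cross X Y W Z
  have hXW' : (0 : ℝ) < cross X W := by exact_mod_cast hXW
  unfold BelowChord at *
  refine lt_of_mul_lt_mul_left ?_ hXW'.le
  linear_combination (cross X Z : ℝ) * hY + (cross X Y : ℝ) * hW - L X * hP

theorem extend_right (hW : BelowChord L X W D) (hD : BelowChord L W D Z) (hXW : 0 < cross X W)
    (hWD : 0 < cross W D) (hWZ : 0 < cross W Z) : BelowChord L X W Z := by
  have hP : (cross X D * cross W Z : ℝ) = cross X W * cross D Z + cross X Z * cross W D := by
    exact_mod_cast cross_mul_cross X W D Z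
  have hWD' : (0 : ℝ) < cross W D := by exact_mod_cast hWD
  unfold BelowChord at *
  refine lt_of_mul_lt_mul_left ?_ hWD'.le
  linear_combination (cross W Z : ℝ) * hW + (cross X W : ℝ) * hD - L W * hP

end BelowChord

section Convexity

variable {L : ℤ × ℤ → ℝ}

theorem map_smul_add_smul_lt (hadd : ∀ v w, cross v w = 1 → L (v + w) < L v + L w)
    {v w : ℤ × ℤ} (hvw : cross v w = 1) {s t : ℤ} (hs : 0 < s) (ht : 0 < t)
    (hst : IsCoprime s t) : L (s • v + t • w) < s * L v + t * L w := by
  have hsum := hadd v w hvw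
  rcases lt_trichotomy s t with hlt | rfl | hgt
  · have hrec := map_smul_add_smul_lt hadd (v := v + w) (w := w)
      (by rwa [cross_add_left]) hs (sub_pos.2 hlt)
      (by simpa [sub_eq_add_neg] using hst.add_mul_left_right (-1))
    rw [show s • (v + w) + (t - s) • w = s • v + t • w by module] at hrec
    push_cast at hrec
    linear_combination hrec + (s : ℝ) * hsum
  · obtain rfl : s = 1 := by
      have := Int.isUnit_iff.mp (isCoprime_self.mp hst)
      omega
    simpa using hsum
  · have hrec := map_smul_add_smul_lt hadd (v := v) (w := v + w)
      (by rwa [cross_add_right]) (sub_pos.2 hgt) ht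
      (by simpa [sub_eq_add_neg] using hst.add_mul_right_left (-1))
    rw [show (s - t) • v + t • (v + w) = s • v + t • w by module] at hrec
    push_cast at hrec
    linear_combination hrec + (t : ℝ) * hsum
termination_by (s + t).toNat
decreasing_by all_goals omega

theorem belowChord_of_cross_eq_one (hadd : ∀ v w, cross v w = 1 → L (v + w) < L v + L w)
    {X Y Z : ℤ × ℤ} (hY : Primitive Y) (hXZ : cross X Z = 1) (hXY : 0 < cross X Y)
    (hYZ : 0 < cross Y Z) : BelowChord L X Y Z := by
  have hYeq := cross_smul_add_smul X Y Z
  rw [hXZ, one_smul] at hYeq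
  rw [← hYeq] at hY
  have := map_smul_add_smul_lt hadd hXZ hYZ hXY hY.isCoprime_of_smul_add_smul
  rw [hYeq] at this
  simpa [BelowChord, hXZ] using this

/-- Induction on `cross X Z`: the Farey neighbour `W` of `X` towards `Z` splits the chord, and `W`
lies below it by the local hypothesis at `X, W, D`, with `D` the next neighbour towards `Z`. -/
theorem belowChord_of_forall_cross_eq_one
    (hloc : ∀ X W D, cross X W = 1 → cross W D = 1 → 0 < cross X D → BelowChord L X W D)
    {X Y Z : ℤ × ℤ} (hX : Primitive X) (hY : Primitive Y) (hZ : Primitive Z)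
    (hXY : 0 < cross X Y) (hYZ : 0 < cross Y Z) (hXZ : 0 < cross X Z) : BelowChord L X Y Z := by
  have hadd (v w : ℤ × ℤ) (h : cross v w = 1) : L (v + w) < L v + L w := by
    simpa [BelowChord, h, cross_add_left, cross_add_right] using
      hloc v (v + w) w (by rwa [cross_add_right]) (by rwa [cross_add_left]) (by omega)
  obtain hXZ1 | hXZ1 := (show cross X Z = 1 ∨ 1 < cross X Z by omega)
  · exact belowChord_of_cross_eq_one hadd hY hXZ1 hXY hYZ
  obtain ⟨W, hXW, hWZ, hWZlt⟩ := exists_cross_eq_one_of_one_lt_cross hX hZ hXZ1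
  have hW : BelowChord L X W Z := by
    obtain hWZ1 | hWZ1 := (show cross W Z = 1 ∨ 1 < cross W Z by omega)
    · exact hloc X W Z hXW hWZ1 hXZ
    obtain ⟨D, hWD, hDZ, -⟩ := exists_cross_eq_one_of_one_lt_cross
      (.of_cross_eq_one_right hXW) hZ hWZ1
    have hXD : 0 < cross X D := by nlinarith [cross_mul_cross X W D Z]
    exact (hloc X W D hXW hWD hXD).extend_right
      (belowChord_of_forall_cross_eq_one hloc (.of_cross_eq_one_right hXW)
        (.of_cross_eq_one_right hWD) hZ (by omega) hDZ hWZ) (by omega) (by omega) hWZ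
  obtain hWY | hWY | hWY := lt_trichotomy (cross W Y) 0
  · have hYW : 0 < cross Y W := by rw [cross_swap]; omega
    exact (belowChord_of_forall_cross_eq_one hloc hX hY (.of_cross_eq_one_right hXW) hXY hYW
      (by omega)).of_left hW hXZ hXY (by omega)
  · rwa [eq_of_cross_eq_zero hY hXW hWY hXY]
  · exact hW.of_right (belowChord_of_forall_cross_eq_one hloc (.of_cross_eq_one_right hXW) hY hZ
      hWY hYZ hWZ) hXZ hYZ hWZ
termination_by (cross X Z).toNat
decreasing_by all_goals omega

end Convexity

def IsMarkoff (x y z : ℝ) : Prop := x ^ 2 + y ^ 2 + z ^ 2 = x * y * z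

namespace IsMarkoff

variable {x y z : ℝ}

theorem swap (h : IsMarkoff x y z) : IsMarkoff y x z := by
  unfold IsMarkoff at *; linear_combination h

theorem swap_right (h : IsMarkoff x y z) : IsMarkoff x z y := by
  unfold IsMarkoff at *; linear_combination h

theorem vieta (h : IsMarkoff x y z) : IsMarkoff x y (x * y - z) := by
  unfold IsMarkoff at *; linear_combination h

theorem two_lt (h : IsMarkoff x y z) (hx : 2 < x) (hy : 2 < y) : 2 < z := by
  unfold IsMarkoff at h
  nlinarith [sq_nonneg (x - y), mul_pos (sub_pos.2 hx) (sub_pos.2 hy)]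

end IsMarkoff

def MarkoffPair (T : ℤ × ℤ → ℝ) (v w : ℤ × ℤ) : Prop :=
  2 < T v ∧ 2 < T w ∧ IsMarkoff (T v) (T w) (T (v + w))

/-- The larger root `λ` of `λ + λ⁻¹ = t`. -/
noncomputable def traceRoot (t : ℝ) : ℝ := (t + √(t ^ 2 - 4)) / 2

theorem traceLength_eq_two_mul_log (t : ℝ) : traceLength t = 2 * Real.log (traceRoot t) := rfl

theorem one_lt_traceRoot {t : ℝ} (ht : 2 < t) : 1 < traceRoot t := by
  unfold traceRoot
  nlinarith [Real.sqrt_nonneg (t ^ 2 - 4)]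

theorem traceRoot_add_inv {t : ℝ} (ht : 2 < t) : traceRoot t + (traceRoot t)⁻¹ = t := by
  have hpos : 0 < traceRoot t := one_pos.trans (one_lt_traceRoot ht)
  have hsq : √(t ^ 2 - 4) ^ 2 = t ^ 2 - 4 := Real.sq_sqrt (by nlinarith)
  field_simp
  unfold traceRoot
  linear_combination hsq / 4

theorem lt_traceRoot_add {α β : ℝ} (hαβ : 1 < α * β) : α < traceRoot (α + β) := by
  have : α - β < √((α + β) ^ 2 - 4) := Real.lt_sqrt_of_sq_lt (by nlinarith)
  unfold traceRoot
  linarith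

theorem exists_eq_mul_traceRoot_pow_add {τ : ℝ} {t : ℕ → ℝ} (hτ : 2 < τ) (h₀ : 0 < t 0)
    (hmk : IsMarkoff τ (t 0) (t 1)) (hrec : ∀ m, t (m + 2) = τ * t (m + 1) - t m) :
    ∃ A B : ℝ, 0 < A ∧ 0 < B ∧ 1 < A * B ∧
      ∀ m, t m = A * traceRoot τ ^ m + B * (traceRoot τ)⁻¹ ^ m := by
  set l := traceRoot τ
  set μ := l⁻¹
  have hl : 1 < l := one_lt_traceRoot hτ
  have hτl : l + μ = τ := traceRoot_add_inv hτ
  have hlμ : l * μ = 1 := mul_inv_cancel₀ (by positivity)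
  have hgap : l - μ ≠ 0 := (sub_pos.2 (inv_lt_one_of_one_lt₀ hl |>.trans hl)).ne'
  set A := (t 1 - t 0 * μ) / (l - μ)
  set B := (t 0 * l - t 1) / (l - μ)
  have hA : A * (l - μ) = t 1 - t 0 * μ := div_mul_cancel₀ _ hgap
  have hB : B * (l - μ) = t 0 * l - t 1 := div_mul_cancel₀ _ hgap
  have hform : ∀ m, t m = A * l ^ m + B * μ ^ m := by
    intro m
    induction m using Nat.strong_induction_on with
    | _ m ih =>
      match m with
      | 0 => exact mul_right_cancel₀ hgap (by linear_combination -hA - hB)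
      | 1 => exact mul_right_cancel₀ hgap (by linear_combination -l * hA - μ * hB)
      | m + 2 =>
        rw [hrec, ih (m + 1) (by omega), ih m (by omega), ← hτl]
        linear_combination (A * l ^ m + B * μ ^ m) * hlμ
  -- `A * B = τ² / (τ² - 4)` by the Markoff relation
  have hAB : 1 < A * B := by
    have hsq : (l - μ) ^ 2 = τ ^ 2 - 4 := by
      rw [← hτl]; linear_combination (-4 : ℝ) * hlμ
    have hprod : A * B * (τ ^ 2 - 4) = τ ^ 2 := by
      unfold IsMarkoff at hmk
      rw [← hsq]
      linear_combination (B * (l - μ)) * hA + (t 1 - t 0 * μ) * hB - hmk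
        + t 0 * t 1 * hτl - t 0 ^ 2 * hlμ
    nlinarith
  have hsum : A + B = t 0 := by simpa using (hform 0).symm
  refine ⟨A, B, ?_, ?_, hAB, hform⟩ <;> nlinarith

theorem nat_mul_traceLength_lt {τ : ℝ} {t : ℕ → ℝ} (hτ : 2 < τ) (h₀ : 0 < t 0)
    (hmk : IsMarkoff τ (t 0) (t 1)) (hrec : ∀ m, t (m + 2) = τ * t (m + 1) - t m) (κ : ℕ) :
    κ * traceLength τ < traceLength (t 0) + traceLength (t κ) := by
  obtain ⟨A, B, hA, hB, hAB, hform⟩ := exists_eq_mul_traceRoot_pow_add hτ h₀ hmk hrec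
  set l := traceRoot τ
  have hl : 0 < l := one_pos.trans (one_lt_traceRoot hτ)
  have hprod : A * l ^ κ * (B * l⁻¹ ^ κ) = A * B := by
    rw [inv_pow]; field_simp
  have h₀' : B < traceRoot (t 0) := by
    rw [hform 0, pow_zero, pow_zero, mul_one, mul_one, add_comm]
    exact lt_traceRoot_add (by linarith)
  have hκ : A * l ^ κ < traceRoot (t κ) := by
    rw [hform κ]
    exact lt_traceRoot_add (by rw [hprod]; exact hAB)
  have key : l ^ κ < traceRoot (t 0) * traceRoot (t κ) :=
    calc l ^ κ < A * B * l ^ κ := lt_mul_left (by positivity) hAB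
      _ = B * (A * l ^ κ) := by ring
      _ < traceRoot (t 0) * traceRoot (t κ) :=
        mul_lt_mul'' h₀' hκ hB.le (by positivity)
  have hlog := Real.log_lt_log (by positivity) key
  rw [Real.log_pow, Real.log_mul (by linarith) (by nlinarith [pow_pos hl κ])] at hlog
  simp only [traceLength_eq_two_mul_log]
  linarith

namespace IsTraceFunction

variable {a b c : ℝ} {T : ℤ × ℤ → ℝ}

theorem map_sub (hT : IsTraceFunction a b c T) {v w : ℤ × ℤ} (h : cross v w = 1) :
    T (v - w) = T v * T w - T (v + w) := by
  linarith [hT.add_rule v w (.of_cross_eq_one_left h) (.of_cross_eq_one_right h) (.inl h)]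

theorem map_sub_rev (hT : IsTraceFunction a b c T) {v w : ℤ × ℤ} (h : cross v w = 1) :
    T (w - v) = T v * T w - T (v + w) := by
  have hwv : Primitive (w - v) := .of_cross_eq_one_right (v := v) (by rwa [cross_sub_right])
  rw [← hT.neg_eq _ hwv, neg_sub, hT.map_sub h]

theorem markoffPair_add (hT : IsTraceFunction a b c T) {v w : ℤ × ℤ} (h : cross v w = 1)
    (hvw : MarkoffPair T v w) : MarkoffPair T v (v + w) := by
  obtain ⟨hv, hw, hmk⟩ := hvw
  have hsum : T (v + (v + w)) = T v * T (v + w) - T w := by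
    have := hT.map_sub (v := v) (w := v + w) (by rwa [cross_add_right])
    rw [sub_add_cancel_left, hT.neg_eq _ (.of_cross_eq_one_right h)] at this
    linarith
  exact ⟨hv, hmk.two_lt hv hw, hsum ▸ hmk.swap_right.vieta⟩

theorem markoffPair_sub (hT : IsTraceFunction a b c T) {v w : ℤ × ℤ} (h : cross v w = 1)
    (hvw : MarkoffPair T v w) : MarkoffPair T v (w - v) := by
  obtain ⟨hv, hw, hmk⟩ := hvw
  refine ⟨hv, ?_, ?_⟩
  · rw [hT.map_sub_rev h]; exact hmk.vieta.two_lt hv hw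
  · rw [hT.map_sub_rev h, add_sub_cancel]; exact hmk.vieta.swap_right

theorem markoffPair_rotate (hT : IsTraceFunction a b c T) {v w : ℤ × ℤ} (h : cross v w = 1)
    (hvw : MarkoffPair T v w) : MarkoffPair T w (-v) := by
  obtain ⟨hv, hw, hmk⟩ := hvw
  rw [MarkoffPair, hT.neg_eq _ (.of_cross_eq_one_left h), ← sub_eq_add_neg, hT.map_sub_rev h]
  exact ⟨hw, hv, hmk.vieta.swap⟩

theorem markoffPair_rotate_inv (hT : IsTraceFunction a b c T) {v w : ℤ × ℤ} (h : cross v w = 1)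
    (hvw : MarkoffPair T v w) : MarkoffPair T (-w) v := by
  obtain ⟨hv, hw, hmk⟩ := hvw
  rw [MarkoffPair, hT.neg_eq _ (.of_cross_eq_one_right h), neg_add_eq_sub, hT.map_sub h]
  exact ⟨hw, hv, hmk.vieta.swap⟩

open Matrix MatrixGroups in
/-- Every unimodular pair is the pair of columns of a matrix in `SL(2, ℤ)`, and right
multiplication by the generators `S`, `T` of `SL(2, ℤ)` acts on the columns by the moves above. -/
theorem markoffPair_of_cross_eq_one (hT : IsTraceFunction a b c T) (ha : 2 < a)
    (hc : 2 < c) (habc : a ^ 2 + b ^ 2 + c ^ 2 = a * b * c) {v w : ℤ × ℤ}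
    (h : cross v w = 1) : MarkoffPair T v w := by
  let P (g : SL(2, ℤ)) : Prop := MarkoffPair T (g 0 0, g 1 0) (g 0 1, g 1 1)
  have hcross (g : SL(2, ℤ)) : cross (g 0 0, g 1 0) (g 0 1, g 1 1) = 1 := by
    have := g.det_coe
    rw [det_fin_two] at this
    simp only [cross]
    linear_combination this
  have hP (g : SL(2, ℤ)) : P g := by
    have hg : g ∈ Subgroup.closure {ModularGroup.S, ModularGroup.T} := by
      simp [SpecialLinearGroup.SL2Z_generators]
    induction hg using Subgroup.closure_induction_right with
    | one =>
      refine ⟨by simpa [hT.map_10], by simpa [hT.map_01], ?_⟩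
      simpa [hT.map_10, hT.map_01, hT.map_11, IsMarkoff] using by linear_combination habc
    | mul_right g _ s hs hg =>
      rcases hs with rfl | rfl
      · simpa [P, ModularGroup.coe_S, mul_apply, Fin.sum_univ_two] using
          hT.markoffPair_rotate (hcross g) hg
      · simpa [P, ModularGroup.coe_T, mul_apply, Fin.sum_univ_two, add_comm] using
          hT.markoffPair_add (hcross g) hg
    | mul_inv_cancel g _ s hs hg =>
      rcases hs with rfl | rfl
      · simpa [P, ModularGroup.coe_S, SpecialLinearGroup.coe_inv, adjugate_fin_two, mul_apply,
          Fin.sum_univ_two] using hT.markoffPair_rotate_inv (hcross g) hg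
      · simpa [P, ModularGroup.coe_T_inv, mul_apply, Fin.sum_univ_two, sub_eq_neg_add] using
          hT.markoffPair_sub (hcross g) hg
  exact hP ⟨!![v.1, w.1; v.2, w.2], by rw [det_fin_two_of]; rw [cross] at h; linear_combination h⟩

theorem nat_mul_traceLength_lt (hT : IsTraceFunction a b c T)
    (hmk : ∀ v w, cross v w = 1 → MarkoffPair T v w) {P W : ℤ × ℤ} (hPW : cross P W = 1)
    (κ : ℕ) :
    κ * traceLength (T W) < traceLength (T P) + traceLength (T ((κ : ℤ) • W - P)) := by
  obtain ⟨hW, hP, hmkPW⟩ := hmk W (-P) (by rw [cross_neg_right, cross_swap, neg_neg, hPW])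
  have hrec (m : ℕ) :
      T (((m + 2 : ℕ) : ℤ) • W - P) = T W * T (((m + 1 : ℕ) : ℤ) • W - P) - T ((m : ℤ) • W - P) := by
    have hcross : cross W ((((m + 1 : ℕ) : ℤ)) • W - P) = 1 := by
      rw [cross_swap, cross_smul_sub_left, neg_neg, hPW]
    have h := hT.map_sub_rev hcross
    rw [show (((m + 1 : ℕ) : ℤ)) • W - P - W = (m : ℤ) • W - P by push_cast; module,
      show W + ((((m + 1 : ℕ) : ℤ)) • W - P) = (((m + 2 : ℕ) : ℤ)) • W - P by push_cast; module] at h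
    linarith
  have := _root_.nat_mul_traceLength_lt (t := fun m : ℕ => T ((m : ℤ) • W - P)) hW
    (by simpa using hP.trans' two_pos) (by simpa [sub_eq_add_neg] using hmkPW) hrec κ
  simpa [hT.neg_eq P (.of_cross_eq_one_left hPW)] using this

theorem belowChord_traceLength (hT : IsTraceFunction a b c T)
    (hmk : ∀ v w, cross v w = 1 → MarkoffPair T v w) {X W D : ℤ × ℤ} (hXW : cross X W = 1)
    (hWD : cross W D = 1) (hXD : 0 < cross X D) :
    BelowChord (fun v => traceLength (T v)) X W D := by
  have hD : D = cross X D • W - X := by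
    have := cross_smul_add_smul X W D
    rw [hWD, hXW, one_smul, one_smul] at this
    rw [← this]; abel
  have := hT.nat_mul_traceLength_lt hmk hXW (cross X D).toNat
  have hκ : ((cross X D).toNat : ℝ) = cross X D := by exact_mod_cast Int.toNat_of_nonneg hXD.le
  rw [Int.toNat_of_nonneg hXD.le, ← hD, hκ] at this
  simpa [BelowChord, hWD, hXW] using this

end IsTraceFunction

def ratVec (r : ℚ) : ℤ × ℤ := (r.num, r.den)

theorem primitive_ratVec (r : ℚ) : Primitive (ratVec r) :=
  Int.isCoprime_iff_gcd_eq_one.mpr (by simpa [Int.gcd, ratVec] using r.reduced)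

theorem cross_ratVec (r s : ℚ) : (cross (ratVec s) (ratVec r) : ℝ) = (s - r) * r.den * s.den := by
  simp only [cross, ratVec]
  push_cast
  rw [Rat.cast_def, Rat.cast_def]
  field_simp

theorem cross_ratVec_pos {r s : ℚ} (h : r < s) : 0 < cross (ratVec s) (ratVec r) := by
  have : (0 : ℝ) < cross (ratVec s) (ratVec r) := by
    rw [cross_ratVec]
    have : (r : ℝ) < s := by exact_mod_cast h
    positivity
  exact_mod_cast this

theorem Ffun_chord_of_belowChord {T : ℤ × ℤ → ℝ} {x y z : ℚ}
    (h : BelowChord (fun v => traceLength (T v)) (ratVec z) (ratVec y) (ratVec x)) :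
    (Ffun T y - Ffun T x) * ((z : ℝ) - y) < (Ffun T z - Ffun T y) * ((y : ℝ) - x) := by
  simp only [BelowChord, cross_ratVec] at h
  have hx : (0 : ℝ) < x.den := by exact_mod_cast x.pos
  have hy : (0 : ℝ) < y.den := by exact_mod_cast y.pos
  have hz : (0 : ℝ) < z.den := by exact_mod_cast z.pos
  set Lx := traceLength (T (ratVec x))
  set Ly := traceLength (T (ratVec y))
  set Lz := traceLength (T (ratVec z))
  have hF : (Ffun T z - Ffun T y) * ((y : ℝ) - x) - (Ffun T y - Ffun T x) * ((z : ℝ) - y) =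
      ((y - x) * x.den * y.den * Lz + (z - y) * y.den * z.den * Lx - (z - x) * x.den * z.den * Ly)
        / (x.den * y.den * z.den) := by
    simp only [Ffun, Lx, Ly, Lz, ratVec]
    field_simp
    ring
  rw [← sub_pos, hF]
  exact div_pos (sub_pos.2 h) (by positivity)

theorem F_strictly_convex_general (a b c : ℝ) (ha : 2 < a) (hc : 2 < c)
    (habc : a ^ 2 + b ^ 2 + c ^ 2 = a * b * c)
    (T : ℤ × ℤ → ℝ) (hT : IsTraceFunction a b c T) :
    ∀ x y z : ℚ, 0 ≤ x → x < y → y < z → z ≤ 1 →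
      (Ffun T y - Ffun T x) * ((z : ℝ) - (y : ℝ)) <
        (Ffun T z - Ffun T y) * ((y : ℝ) - (x : ℝ)) := by
  intro x y z _ hxy hyz _
  have hmk (v w : ℤ × ℤ) := hT.markoffPair_of_cross_eq_one ha hc habc (v := v) (w := w)
  -- `ratVec` reverses the order of `ℚ`, so the chord runs from `z` to `x`
  exact Ffun_chord_of_belowChord <| belowChord_of_forall_cross_eq_one
    (fun _ _ _ => hT.belowChord_traceLength hmk)
    (primitive_ratVec z) (primitive_ratVec y) (primitive_ratVec x)
    (cross_ratVec_pos hyz) (cross_ratVec_pos hxy) (cross_ratVec_pos (hxy.trans hyz))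

/-- For a Markoff triple of reals `(a,b,c)` with trace function `T`, the function `F`
is strictly convex on the rationals of `[0,1]`: for rationals `0 ≤ x < y < z ≤ 1`,
`(F(y) − F(x))·(z − y) < (F(z) − F(y))·(y − x)`. -/
theorem F_strictly_convex (a b c : ℝ) (ha : 2 < a) (hb : 2 < b) (hc : 2 < c)
    (habc : a ^ 2 + b ^ 2 + c ^ 2 = a * b * c)
    (T : ℤ × ℤ → ℝ) (hT : IsTraceFunction a b c T) :
    ∀ x y z : ℚ, 0 ≤ x → x < y → y < z → z ≤ 1 →
      (Ffun T y - Ffun T x) * ((z : ℝ) - (y : ℝ)) <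
        (Ffun T z - Ffun T y) * ((y : ℝ) - (x : ℝ)) :=
  F_strictly_convex_general a b c ha hc habc T hT
end

section
/- Let (a,b,c) be a Markoff triple of reals and T a trace function for (a,b,c). Then the sum over all pairs of coprime integers (p,q) with 0 < p < q of (1 − √(1 − 4/T(p,q)²)) converges, and equals c/(a·b) − (1−√(1−4/a²))/2 − (1−√(1−4/b²))/2. -/
/-!
Label the edges of the Farey tree by binary words: edge `w` joins Farey neighbours `u, v`
(`det (u, v) = -1`, both in the sector `0 ≤ x ≤ y`), and its mediant `u + v` runs exactly once
over the coprime `(p, q)` with `0 < p < q`. Along the tree the traces `(T u, T v, T (u + v))` are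
Markoff triples, obtained from `(a, b, a * b - c)` by Vieta flips.

With `F t = 1 - √(1 - 4 / t²)`, the edge weight `E (x, y, z) = 1 - z / (x y) - F x / 2 - F y / 2`
of a Markoff triple is nonnegative and telescopes:
`E (x, y, z) = F z + E (x, z, x z - y) + E (z, y, z y - x)`. Hence `E (a, b, a b - c)` is the sum
of `F (T m)` over the mediants `m` of depth `< n` plus the total weight of the edges of depth
`n`, so the partial sums are bounded and the sum converges. Only finitely many edges are not
ascending (`max (T u) (T v) ≤ T (u + v)`), so deep mediant traces are the larger root of their
Markoff equation, and there `E ≤ C · F (T (u + v))` with `C` uniform because the traces stay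
away from `2`. The weight of depth `n` therefore tends to `0`.
-/

open Filter Topology

namespace McShane

noncomputable section

lemma primitive_fst_of_det {u v : ℤ × ℤ} (h : u.1 * v.2 - u.2 * v.1 = -1) : Primitive u :=
  ⟨-v.2, v.1, by linear_combination -h⟩

lemma primitive_snd_of_det {u v : ℤ × ℤ} (h : u.1 * v.2 - u.2 * v.1 = -1) : Primitive v :=
  ⟨u.2, -u.1, by linear_combination -h⟩

structure IsFareyPair (u v : ℤ × ℤ) : Prop where
  left_nonneg : 0 ≤ u.1
  left_lt : u.1 < u.2
  right_pos : 0 < v.1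
  right_le : v.1 ≤ v.2
  det_eq : u.1 * v.2 - u.2 * v.1 = -1

def fareyEdge : List Bool → (ℤ × ℤ) × (ℤ × ℤ)
  | [] => ((0, 1), (1, 1))
  | false :: w => ((fareyEdge w).1, (fareyEdge w).1 + (fareyEdge w).2)
  | true :: w => ((fareyEdge w).1 + (fareyEdge w).2, (fareyEdge w).2)

def mediant (w : List Bool) : ℤ × ℤ := (fareyEdge w).1 + (fareyEdge w).2

lemma isFareyPair_fareyEdge (w : List Bool) : IsFareyPair (fareyEdge w).1 (fareyEdge w).2 := by
  induction w with
  | nil => exact ⟨le_rfl, one_pos, one_pos, le_rfl, by norm_num [fareyEdge]⟩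
  | cons b w ih =>
    obtain ⟨h₁, h₂, h₃, h₄, hdet⟩ := ih
    cases b <;> refine ⟨?_, ?_, ?_, ?_, ?_⟩ <;>
      simp only [fareyEdge, Prod.fst_add, Prod.snd_add] <;> first | omega | linear_combination hdet

lemma fareyEdge_cons_injective (b : Bool) {w w' : List Bool}
    (h : fareyEdge (b :: w) = fareyEdge (b :: w')) : fareyEdge w = fareyEdge w' := by
  cases b <;> obtain ⟨h₁, h₂⟩ := Prod.mk.inj h
  · rw [h₁, add_right_inj] at h₂
    exact Prod.ext h₁ h₂
  · rw [h₂, add_left_inj] at h₁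
    exact Prod.ext h₁ h₂

lemma fareyEdge_false_cons_snd_lt (w : List Bool) :
    (fareyEdge (false :: w)).1.2 < (fareyEdge (false :: w)).2.2 := by
  have := (isFareyPair_fareyEdge w).right_le
  have := (isFareyPair_fareyEdge w).right_pos
  show (fareyEdge w).1.2 < (fareyEdge w).1.2 + (fareyEdge w).2.2
  omega

lemma fareyEdge_true_cons_snd_lt (w : List Bool) :
    (fareyEdge (true :: w)).2.2 < (fareyEdge (true :: w)).1.2 := by
  have := (isFareyPair_fareyEdge w).left_nonneg
  have := (isFareyPair_fareyEdge w).left_lt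
  show (fareyEdge w).2.2 < (fareyEdge w).1.2 + (fareyEdge w).2.2
  omega

theorem fareyEdge_injective : Function.Injective fareyEdge := by
  intro w w' h
  induction w generalizing w' with
  | nil =>
    rcases w' with _ | ⟨_ | _, t⟩
    · rfl
    · have := fareyEdge_false_cons_snd_lt t
      rw [← h] at this
      simp [fareyEdge] at this
    · have := fareyEdge_true_cons_snd_lt t
      rw [← h] at this
      simp [fareyEdge] at this
  | cons b t ih =>
    rcases w' with _ | ⟨b', t'⟩
    · rcases b with _ | _
      · have := fareyEdge_false_cons_snd_lt t
        rw [h] at this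
        simp [fareyEdge] at this
      · have := fareyEdge_true_cons_snd_lt t
        rw [h] at this
        simp [fareyEdge] at this
    · obtain rfl : b = b' := by
        have h₁ := fareyEdge_false_cons_snd_lt t
        have h₂ := fareyEdge_true_cons_snd_lt t
        have h₃ := fareyEdge_false_cons_snd_lt t'
        have h₄ := fareyEdge_true_cons_snd_lt t'
        cases b <;> cases b' <;> simp_all
        all_goals omega
      rw [ih (fareyEdge_cons_injective b h)]

theorem exists_fareyEdge_eq {u v : ℤ × ℤ} (h : IsFareyPair u v) :
    ∃ w, fareyEdge w = (u, v) := by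
  obtain ⟨h₁, h₂, h₃, h₄, hdet⟩ := h
  rcases lt_trichotomy u.2 v.2 with hlt | heq | hgt
  · have : IsFareyPair u (v - u) := by
      refine ⟨h₁, h₂, ?_, ?_, ?_⟩ <;> simp only [Prod.fst_sub, Prod.snd_sub]
      · nlinarith
      · nlinarith
      · linear_combination hdet
    obtain ⟨w, hw⟩ := exists_fareyEdge_eq this
    exact ⟨false :: w, by simp [fareyEdge, hw]⟩
  · refine ⟨[], ?_⟩
    have : u.2 * (v.1 - u.1) = 1 := by linear_combination -hdet - u.1 * heq
    have hu₂ := Int.eq_one_of_mul_eq_one_right (by omega) this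
    ext <;> simp [fareyEdge] <;> nlinarith
  · have : IsFareyPair (u - v) v := by
      refine ⟨?_, ?_, h₃, h₄, ?_⟩ <;> simp only [Prod.fst_sub, Prod.snd_sub]
      · nlinarith
      · nlinarith
      · linear_combination hdet
    obtain ⟨w, hw⟩ := exists_fareyEdge_eq this
    exact ⟨true :: w, by simp [fareyEdge, hw]⟩
termination_by (u.2 + v.2).toNat
decreasing_by all_goals simp only [Prod.snd_sub]; omega

lemma eq_of_det_eq_neg_one {m u u' : ℤ × ℤ} (hu : 0 ≤ u.1 ∧ u.1 < m.1)
    (hu' : 0 ≤ u'.1 ∧ u'.1 < m.1) (hd : u.1 * m.2 - u.2 * m.1 = -1)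
    (hd' : u'.1 * m.2 - u'.2 * m.1 = -1) : u = u' := by
  have hdvd : m.1 ∣ (u.1 - u'.1) * m.2 := ⟨u.2 - u'.2, by linear_combination hd - hd'⟩
  have h₁ : u.1 = u'.1 := by
    have := Int.eq_zero_of_abs_lt_dvd ((primitive_snd_of_det hd).dvd_of_dvd_mul_right hdvd)
      (abs_sub_lt_iff.2 ⟨by omega, by omega⟩ : |u.1 - u'.1| < m.1)
    omega
  have h₂ : (u.2 - u'.2) * m.1 = 0 := by linear_combination hd' - hd + m.2 * h₁
  exact Prod.ext h₁ (by simpa [sub_eq_zero, hu.2.ne'.symm, (hu.1.trans_lt hu.2).ne'] using h₂)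

lemma exists_det_eq_neg_one {m : ℤ × ℤ} (hm : 0 < m.1) (h : IsCoprime m.1 m.2) :
    ∃ u : ℤ × ℤ, (0 ≤ u.1 ∧ u.1 < m.1) ∧ u.1 * m.2 - u.2 * m.1 = -1 := by
  obtain ⟨x, y, hxy⟩ := h
  refine ⟨((-y) % m.1, x - (-y) / m.1 * m.2),
    ⟨Int.emod_nonneg _ hm.ne', Int.emod_lt_of_pos _ hm⟩, ?_⟩
  rw [Int.emod_def]
  linear_combination -hxy

lemma isFareyPair_sub {m u : ℤ × ℤ} (hm : 0 < m.1 ∧ m.1 < m.2) (hu : 0 ≤ u.1 ∧ u.1 < m.1)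
    (hd : u.1 * m.2 - u.2 * m.1 = -1) : IsFareyPair u (m - u) := by
  refine ⟨hu.1, by nlinarith, ?_, ?_, ?_⟩ <;> simp only [Prod.fst_sub, Prod.snd_sub]
  · omega
  · nlinarith
  · linear_combination hd

lemma fst_fareyEdge_lt_mediant (w : List Bool) :
    0 ≤ (fareyEdge w).1.1 ∧ (fareyEdge w).1.1 < (mediant w).1 := by
  have h := isFareyPair_fareyEdge w
  exact ⟨h.left_nonneg, by simp only [mediant, Prod.fst_add]; linarith [h.right_pos]⟩

lemma det_fareyEdge_mediant (w : List Bool) :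
    (fareyEdge w).1.1 * (mediant w).2 - (fareyEdge w).1.2 * (mediant w).1 = -1 := by
  simp only [mediant, Prod.fst_add, Prod.snd_add]
  linear_combination (isFareyPair_fareyEdge w).det_eq

theorem mediant_injective : Function.Injective mediant := by
  intro w w' h
  have hu := eq_of_det_eq_neg_one (fst_fareyEdge_lt_mediant w)
    (h ▸ fst_fareyEdge_lt_mediant w') (det_fareyEdge_mediant w) (h ▸ det_fareyEdge_mediant w')
  have hv : (fareyEdge w).2 = (fareyEdge w').2 := by
    simpa [mediant, hu] using h
  exact fareyEdge_injective (Prod.ext hu hv)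

theorem exists_mediant_eq {m : ℤ × ℤ} (hm : 0 < m.1 ∧ m.1 < m.2) (h : IsCoprime m.1 m.2) :
    ∃ w, mediant w = m := by
  obtain ⟨u, hu, hd⟩ := exists_det_eq_neg_one hm.1 h
  obtain ⟨w, hw⟩ := exists_fareyEdge_eq (isFareyPair_sub hm hu hd)
  exact ⟨w, by simp [mediant, hw]⟩

lemma mediant_mem (w : List Bool) : 0 < (mediant w).1 ∧ (mediant w).1 < (mediant w).2 ∧
    IsCoprime (mediant w).1 (mediant w).2 := by
  have h := isFareyPair_fareyEdge w
  refine ⟨?_, ?_, primitive_snd_of_det (det_fareyEdge_mediant w)⟩ <;>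
    simp only [mediant, Prod.fst_add, Prod.snd_add] <;> linarith [h.1, h.2, h.3, h.4]

def mediantEquiv : List Bool ≃ {m : ℤ × ℤ // 0 < m.1 ∧ m.1 < m.2 ∧ IsCoprime m.1 m.2} :=
  Equiv.ofBijective (fun w => ⟨mediant w, mediant_mem w⟩)
    ⟨fun _ _ h => mediant_injective (congrArg Subtype.val h),
      fun m => (exists_mediant_eq ⟨m.2.1, m.2.2.1⟩ m.2.2.2).imp fun _ hw => Subtype.ext hw⟩

def mcshaneTerm (t : ℝ) : ℝ := 1 - √(1 - 4 / t ^ 2)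

lemma mcshaneTerm_nonneg (t : ℝ) : 0 ≤ mcshaneTerm t := by
  have : 0 ≤ 4 / t ^ 2 := by positivity
  simp only [mcshaneTerm, sub_nonneg, Real.sqrt_le_one]
  linarith

lemma mcshaneTerm_pos {t : ℝ} (ht : t ≠ 0) : 0 < mcshaneTerm t := by
  have : 0 < 4 / t ^ 2 := by positivity
  simp only [mcshaneTerm, sub_pos, Real.sqrt_lt' one_pos]
  linarith

lemma mcshaneTerm_le_mcshaneTerm {s t : ℝ} (hs : 0 < s) (hst : s ≤ t) :
    mcshaneTerm t ≤ mcshaneTerm s := by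
  have : 4 / t ^ 2 ≤ 4 / s ^ 2 := by gcongr
  simp only [mcshaneTerm, sub_le_sub_iff_left]
  exact Real.sqrt_le_sqrt (by linarith)

lemma two_div_sq_le_mcshaneTerm {t : ℝ} (ht : 2 ≤ t ^ 2) : 2 / t ^ 2 ≤ mcshaneTerm t := by
  have h₀ : 0 ≤ 1 - 2 / t ^ 2 := by
    rw [sub_nonneg, div_le_one (by linarith)]
    exact ht
  have : √(1 - 4 / t ^ 2) ≤ 1 - 2 / t ^ 2 := by
    rw [Real.sqrt_le_left h₀]
    nlinarith [sq_nonneg (2 / t ^ 2), show 4 / t ^ 2 = 2 * (2 / t ^ 2) by ring]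
  simp only [mcshaneTerm]
  linarith

lemma sqrt_one_sub_four_div_sq {t : ℝ} (ht : 0 < t) :
    √(1 - 4 / t ^ 2) = √(t ^ 2 - 4) / t := by
  rw [show 1 - 4 / t ^ 2 = (t ^ 2 - 4) / t ^ 2 by field_simp, Real.sqrt_div' _ (sq_nonneg t),
    Real.sqrt_sq ht.le]

def edgeWeight (x y z : ℝ) : ℝ := 1 - z / (x * y) - mcshaneTerm x / 2 - mcshaneTerm y / 2

lemma edgeWeight_eq {x y z : ℝ} (hx : 0 < x) (hy : 0 < y) :
    edgeWeight x y z = (y * √(x ^ 2 - 4) + x * √(y ^ 2 - 4) - 2 * z) / (2 * (x * y)) := by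
  simp only [edgeWeight, mcshaneTerm, sqrt_one_sub_four_div_sq hx, sqrt_one_sub_four_div_sq hy]
  field_simp
  ring

lemma edgeWeight_lt_one {x y z : ℝ} (hx : 0 < x) (hy : 0 < y) (hz : 0 < z) :
    edgeWeight x y z < 1 := by
  have : 0 < z / (x * y) := by positivity
  have := mcshaneTerm_nonneg x
  have := mcshaneTerm_nonneg y
  simp only [edgeWeight]
  linarith

lemma edgeWeight_eq_add {x y z : ℝ} (hx : x ≠ 0) (hy : y ≠ 0) (hz : z ≠ 0)
    (h : x ^ 2 + y ^ 2 + z ^ 2 = x * y * z) :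
    edgeWeight x y z =
      mcshaneTerm z + edgeWeight x z (x * z - y) + edgeWeight z y (z * y - x) := by
  have key : z / (x * y) = (x * z - y) / (x * z) + (z * y - x) / (z * y) - 1 := by
    field_simp
    linear_combination h
  simp only [edgeWeight, key]
  ring

lemma two_mul_le_of_sq_eq {x y z s t : ℝ} (hx : 0 < x) (hy : 0 < y) (hs : 0 ≤ s) (ht : 0 ≤ t)
    (hs₂ : s ^ 2 = x ^ 2 - 4) (ht₂ : t ^ 2 = y ^ 2 - 4)
    (h : x ^ 2 + y ^ 2 + z ^ 2 = x * y * z) :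
    2 * z ≤ y * s + x * t := by
  have hr₂ : (2 * z - x * y) ^ 2 = (s * t) ^ 2 - 16 := by
    rw [mul_pow, hs₂, ht₂]
    linear_combination 4 * h
  have hr : |2 * z - x * y| ≤ s * t := abs_le_of_sq_le_sq (by linarith) (mul_nonneg hs ht)
  have : (x * y + |2 * z - x * y|) ^ 2 ≤ (y * s + x * t) ^ 2 := by
    nlinarith [sq_abs (2 * z - x * y), mul_pos hx hy]
  have : x * y + |2 * z - x * y| ≤ y * s + x * t := le_of_pow_le_pow_left₀ two_ne_zero
    (add_nonneg (mul_nonneg hy.le hs) (mul_nonneg hx.le ht)) this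
  linarith [le_abs_self (2 * z - x * y)]

lemma mul_sub_two_mul_le_of_sq_eq {x y z s t : ℝ} (hx : 0 < x) (hy : 0 < y) (hs : 0 ≤ s)
    (ht : 0 ≤ t) (hs₂ : s ^ 2 = x ^ 2 - 4) (ht₂ : t ^ 2 = y ^ 2 - 4)
    (h : x ^ 2 + y ^ 2 + z ^ 2 = x * y * z) (hroot : x * y ≤ 2 * z) :
    (y * s + x * t - 2 * z) * (s * t) ≤ 16 := by
  have hr₂ : (2 * z - x * y) ^ 2 = (s * t) ^ 2 - 16 := by
    rw [mul_pow, hs₂, ht₂]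
    linear_combination 4 * h
  have hr : 2 * z - x * y ≤ s * t := (abs_le_of_sq_le_sq' (by linarith) (mul_nonneg hs ht)).2
  have hsx : s ≤ x := by nlinarith
  have hty : t ≤ y := by nlinarith
  have hN : y * s + x * t - 2 * z ≤ s * t - (2 * z - x * y) := by
    nlinarith [mul_nonneg (sub_nonneg.2 hsx) (sub_nonneg.2 hty)]
  -- `s t (s t - r) ≤ (s t)² - r² = 16` for `r = 2 z - x y ≤ s t`
  nlinarith [mul_le_mul_of_nonneg_right hN (mul_nonneg hs ht)]

lemma max_le_mul_sub {x y z : ℝ} (hx : 2 ≤ x) (h : max x y ≤ z) :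
    max x z ≤ x * z - y ∧ x * z ≤ 2 * (x * z - y) := by
  rw [max_le_iff] at h ⊢
  refine ⟨⟨?_, ?_⟩, ?_⟩ <;> nlinarith

structure IsMarkoffTriple (x y z : ℝ) : Prop where
  two_lt_fst : 2 < x
  two_lt_snd : 2 < y
  two_lt_thd : 2 < z
  markoff : x ^ 2 + y ^ 2 + z ^ 2 = x * y * z

namespace IsMarkoffTriple

variable {x y z : ℝ}

lemma two_lt_mul_sub (h : IsMarkoffTriple x y z) : 2 < x * y - z := by
  have key : (z - 2) * (x * y - z - 2) = (x - y) ^ 2 + 4 := by linear_combination -h.markoff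
  have := h.two_lt_thd
  by_contra! hle
  nlinarith [sq_nonneg (x - y), mul_nonpos_of_nonneg_of_nonpos (by linarith : 0 ≤ z - 2)
    (by linarith : x * y - z - 2 ≤ 0)]

lemma flip_thd (h : IsMarkoffTriple x y z) : IsMarkoffTriple x y (x * y - z) :=
  ⟨h.1, h.2, h.two_lt_mul_sub, by linear_combination h.markoff⟩

lemma flip_snd (h : IsMarkoffTriple x y z) : IsMarkoffTriple x z (x * z - y) :=
  (show IsMarkoffTriple x z y from ⟨h.1, h.3, h.2, by linear_combination h.markoff⟩).flip_thd

lemma flip_fst (h : IsMarkoffTriple x y z) : IsMarkoffTriple z y (z * y - x) :=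
  (show IsMarkoffTriple z y x from ⟨h.3, h.2, h.1, by linear_combination h.markoff⟩).flip_thd

lemma two_mul_le (h : IsMarkoffTriple x y z) : 2 * z ≤ y * √(x ^ 2 - 4) + x * √(y ^ 2 - 4) :=
  two_mul_le_of_sq_eq (by linarith [h.1]) (by linarith [h.2]) (Real.sqrt_nonneg _)
    (Real.sqrt_nonneg _) (Real.sq_sqrt (by nlinarith [h.1])) (Real.sq_sqrt (by nlinarith [h.2]))
    h.markoff

lemma edgeWeight_nonneg (h : IsMarkoffTriple x y z) : 0 ≤ edgeWeight x y z := by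
  have hx : 0 < x := by linarith [h.1]
  have hy : 0 < y := by linarith [h.2]
  rw [edgeWeight_eq hx hy]
  exact div_nonneg (by linarith [h.two_mul_le]) (by positivity)

lemma edgeWeight_mul_le (h : IsMarkoffTriple x y z) (hroot : x * y ≤ 2 * z) :
    edgeWeight x y z * (√(1 - 4 / x ^ 2) * √(1 - 4 / y ^ 2)) ≤ 4 * mcshaneTerm z := by
  have hx : 0 < x := by linarith [h.1]
  have hy : 0 < y := by linarith [h.2]
  have hz : 0 < z := by linarith [h.3]
  have hzxy : z ≤ x * y := by nlinarith [h.markoff]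
  rw [edgeWeight_eq hx hy, sqrt_one_sub_four_div_sq hx, sqrt_one_sub_four_div_sq hy]
  set s := √(x ^ 2 - 4)
  set t := √(y ^ 2 - 4)
  have hN := mul_sub_two_mul_le_of_sq_eq hx hy (Real.sqrt_nonneg _) (Real.sqrt_nonneg _)
    (Real.sq_sqrt (by nlinarith [h.1])) (Real.sq_sqrt (by nlinarith [h.2])) h.markoff hroot
  calc (y * s + x * t - 2 * z) / (2 * (x * y)) * (s / x * (t / y))
      = (y * s + x * t - 2 * z) * (s * t) / (2 * (x * y) ^ 2) := by field_simp
    _ ≤ 16 / (2 * (x * y) ^ 2) := by gcongr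
    _ ≤ 16 / (2 * z ^ 2) := by gcongr
    _ = 4 * (2 / z ^ 2) := by ring
    _ ≤ 4 * mcshaneTerm z := by gcongr; exact two_div_sq_le_mcshaneTerm (by nlinarith [h.3])

end IsMarkoffTriple

section Traces

variable {a b c : ℝ} {T : ℤ × ℤ → ℝ} {w : List Bool}

def leftTrace (T : ℤ × ℤ → ℝ) (w : List Bool) : ℝ := T (fareyEdge w).1

def rightTrace (T : ℤ × ℤ → ℝ) (w : List Bool) : ℝ := T (fareyEdge w).2

def mediantTrace (T : ℤ × ℤ → ℝ) (w : List Bool) : ℝ := T (mediant w)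

@[simp] lemma leftTrace_false_cons : leftTrace T (false :: w) = leftTrace T w := rfl

@[simp] lemma rightTrace_false_cons : rightTrace T (false :: w) = mediantTrace T w := rfl

@[simp] lemma leftTrace_true_cons : leftTrace T (true :: w) = mediantTrace T w := rfl

@[simp] lemma rightTrace_true_cons : rightTrace T (true :: w) = rightTrace T w := rfl

lemma leftTrace_nil (hT : IsTraceFunction a b c T) : leftTrace T [] = a := hT.map_01

lemma rightTrace_nil (hT : IsTraceFunction a b c T) : rightTrace T [] = b := hT.map_11

lemma mediantTrace_nil (hT : IsTraceFunction a b c T) : mediantTrace T [] = a * b - c := by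
  have h := hT.add_rule (1, 1) (0, 1) ⟨0, 1, by norm_num⟩ ⟨0, 1, by norm_num⟩ (by norm_num)
  rw [hT.map_11, hT.map_01, show ((1, 1) - (0, 1) : ℤ × ℤ) = (1, 0) by rfl, hT.map_10] at h
  rw [mediantTrace, mediant, fareyEdge, add_comm, h, mul_comm]

lemma mediantTrace_false_cons (hT : IsTraceFunction a b c T) (w : List Bool) :
    mediantTrace T (false :: w) = leftTrace T w * mediantTrace T w - rightTrace T w := by
  have hd := (isFareyPair_fareyEdge w).det_eq
  have hdet : (mediant w).1 * (fareyEdge w).1.2 - (mediant w).2 * (fareyEdge w).1.1 = 1 := by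
    simp only [mediant, Prod.fst_add, Prod.snd_add]
    linear_combination -hd
  have h := hT.add_rule (mediant w) (fareyEdge w).1 (primitive_snd_of_det (det_fareyEdge_mediant w))
    (primitive_fst_of_det hd) (Or.inl hdet)
  rw [mediant, add_sub_cancel_left] at h
  rw [mediantTrace, mediant, fareyEdge, add_comm, h, mul_comm]
  rfl

lemma mediantTrace_true_cons (hT : IsTraceFunction a b c T) (w : List Bool) :
    mediantTrace T (true :: w) = mediantTrace T w * rightTrace T w - leftTrace T w := by
  have hd := (isFareyPair_fareyEdge w).det_eq
  have hdet : (mediant w).1 * (fareyEdge w).2.2 - (mediant w).2 * (fareyEdge w).2.1 = -1 := by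
    simp only [mediant, Prod.fst_add, Prod.snd_add]
    linear_combination hd
  have h := hT.add_rule (mediant w) (fareyEdge w).2 (primitive_snd_of_det (det_fareyEdge_mediant w))
    (primitive_snd_of_det hd) (Or.inr hdet)
  rw [mediant, add_sub_cancel_right] at h
  rw [mediantTrace, mediant, fareyEdge, h]
  rfl

lemma forall_traces_of_forall_mediantTrace (hT : IsTraceFunction a b c T) {P : ℝ → Prop}
    (ha : P a) (hb : P b) (hZ : ∀ w, P (mediantTrace T w)) (w : List Bool) :
    P (leftTrace T w) ∧ P (rightTrace T w) := by
  induction w with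
  | nil => exact ⟨leftTrace_nil hT ▸ ha, rightTrace_nil hT ▸ hb⟩
  | cons d w ih =>
    cases d
    · exact ⟨ih.1, hZ w⟩
    · exact ⟨hZ w, ih.2⟩

lemma isMarkoffTriple_traces (habc : IsMarkoffTriple a b c) (hT : IsTraceFunction a b c T)
    (w : List Bool) : IsMarkoffTriple (leftTrace T w) (rightTrace T w) (mediantTrace T w) := by
  induction w with
  | nil =>
    rw [leftTrace_nil hT, rightTrace_nil hT, mediantTrace_nil hT]
    exact habc.flip_thd
  | cons d w ih =>
    cases d
    · simpa only [leftTrace_false_cons, rightTrace_false_cons, mediantTrace_false_cons hT]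
        using ih.flip_snd
    · simpa only [leftTrace_true_cons, rightTrace_true_cons, mediantTrace_true_cons hT]
        using ih.flip_fst

end Traces

section Levels

def level (n : ℕ) : Finset (List Bool) :=
  (Finset.univ : Finset (Fin n → Bool)).map ⟨List.ofFn, List.ofFn_injective⟩

lemma mem_level {w : List Bool} {n : ℕ} : w ∈ level n ↔ w.length = n := by
  constructor
  · rintro h
    obtain ⟨f, -, rfl⟩ := Finset.mem_map.1 h
    exact List.length_ofFn
  · rintro rfl
    exact Finset.mem_map.2 ⟨w.get, Finset.mem_univ _, List.ofFn_get w⟩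

lemma sum_level_succ {M : Type*} [AddCommMonoid M] (f : List Bool → M) (n : ℕ) :
    ∑ w ∈ level (n + 1), f w = ∑ w ∈ level n, (f (false :: w) + f (true :: w)) := by
  simp only [level, Finset.sum_map, Function.Embedding.coeFn_mk]
  rw [← (Fin.consEquiv fun _ => Bool).sum_comp, Fintype.sum_prod_type, Fintype.sum_bool,
    ← Finset.sum_add_distrib]
  simp [Fin.consEquiv, add_comm]

def shorter (n : ℕ) : Finset (List Bool) := (Finset.range n).biUnion level

lemma mem_shorter {w : List Bool} {n : ℕ} : w ∈ shorter n ↔ w.length < n := by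
  simp [shorter, mem_level]

lemma sum_shorter_succ {M : Type*} [AddCommMonoid M] (f : List Bool → M) (n : ℕ) :
    ∑ w ∈ shorter (n + 1), f w = ∑ w ∈ shorter n, f w + ∑ w ∈ level n, f w := by
  rw [shorter, Finset.range_add_one, Finset.biUnion_insert, Finset.sum_union, add_comm, shorter]
  rw [Finset.disjoint_left]
  intro w hw hw'
  rw [mem_level] at hw
  rw [← shorter, mem_shorter] at hw'
  omega

lemma tendsto_sum_shorter {f : List Bool → ℝ} (hf : Summable f) :
    Tendsto (fun n => ∑ w ∈ shorter n, f w) atTop (𝓝 (∑' w, f w)) :=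
  hf.hasSum.comp <| tendsto_atTop_finset_of_monotone
    (fun _ _ hmn _ hw => mem_shorter.2 ((mem_shorter.1 hw).trans_le hmn))
    (fun w => ⟨w.length + 1, mem_shorter.2 w.length.lt_succ_self⟩)

lemma tendsto_sum_level {f : List Bool → ℝ} (hf : Summable f) :
    Tendsto (fun n => ∑ w ∈ level n, f w) atTop (𝓝 0) := by
  have h := ((tendsto_add_atTop_iff_nat 1).2 (tendsto_sum_shorter hf)).sub (tendsto_sum_shorter hf)
  simpa only [sum_shorter_succ, add_sub_cancel_left, sub_self] using h

end Levels

section Sums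

variable {a b c : ℝ} {T : ℤ × ℤ → ℝ}

def treeWeight (T : ℤ × ℤ → ℝ) (w : List Bool) : ℝ :=
  edgeWeight (leftTrace T w) (rightTrace T w) (mediantTrace T w)

def IsAscending (T : ℤ × ℤ → ℝ) (w : List Bool) : Prop :=
  max (leftTrace T w) (rightTrace T w) ≤ mediantTrace T w

lemma treeWeight_nil (hT : IsTraceFunction a b c T) (hab : a * b ≠ 0) :
    treeWeight T [] = c / (a * b) - mcshaneTerm a / 2 - mcshaneTerm b / 2 := by
  rw [treeWeight, edgeWeight, leftTrace_nil hT, rightTrace_nil hT, mediantTrace_nil hT, sub_div,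
    div_self hab]
  ring

variable (habc : IsMarkoffTriple a b c) (hT : IsTraceFunction a b c T)
include habc hT

lemma treeWeight_eq_add (w : List Bool) :
    treeWeight T w =
      mcshaneTerm (mediantTrace T w) + treeWeight T (false :: w) + treeWeight T (true :: w) := by
  have h := isMarkoffTriple_traces habc hT w
  simp only [treeWeight, leftTrace_false_cons, rightTrace_false_cons, leftTrace_true_cons,
    rightTrace_true_cons, mediantTrace_false_cons hT, mediantTrace_true_cons hT]
  exact edgeWeight_eq_add (by linarith [h.1]) (by linarith [h.2]) (by linarith [h.3]) h.markoff

lemma treeWeight_nil_eq_sum (n : ℕ) :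
    treeWeight T [] = ∑ w ∈ shorter n, mcshaneTerm (mediantTrace T w) +
      ∑ w ∈ level n, treeWeight T w := by
  induction n with
  | zero => simp [shorter, level]
  | succ n ih =>
    rw [sum_shorter_succ, sum_level_succ, add_assoc, ← Finset.sum_add_distrib, ih]
    congr 1
    exact Finset.sum_congr rfl fun w _ => by rw [treeWeight_eq_add habc hT, add_assoc]

lemma sum_mcshaneTerm_le (s : Finset (List Bool)) :
    ∑ w ∈ s, mcshaneTerm (mediantTrace T w) ≤ treeWeight T [] := by
  obtain ⟨n, hn⟩ : ∃ n, s ⊆ shorter n :=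
    ⟨s.sup List.length + 1, fun w hw => mem_shorter.2 (Nat.lt_succ_of_le (s.le_sup hw))⟩
  calc ∑ w ∈ s, mcshaneTerm (mediantTrace T w)
      ≤ ∑ w ∈ shorter n, mcshaneTerm (mediantTrace T w) :=
        Finset.sum_le_sum_of_subset_of_nonneg hn fun _ _ _ => mcshaneTerm_nonneg _
    _ ≤ treeWeight T [] := by
        rw [treeWeight_nil_eq_sum habc hT n, le_add_iff_nonneg_right]
        exact Finset.sum_nonneg fun w _ => (isMarkoffTriple_traces habc hT w).edgeWeight_nonneg

lemma summable_mcshaneTerm : Summable fun w => mcshaneTerm (mediantTrace T w) :=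
  summable_of_sum_le (fun _ => mcshaneTerm_nonneg _) (sum_mcshaneTerm_le habc hT)

lemma IsAscending.cons {w : List Bool} (h : IsAscending T w) (b : Bool) :
    IsAscending T (b :: w) ∧
      leftTrace T (b :: w) * rightTrace T (b :: w) ≤ 2 * mediantTrace T (b :: w) := by
  have hM := isMarkoffTriple_traces habc hT w
  cases b
  · simpa only [IsAscending, leftTrace_false_cons, rightTrace_false_cons,
      mediantTrace_false_cons hT] using max_le_mul_sub hM.1.le h
  · have := max_le_mul_sub hM.2.le ((max_comm _ _).trans_le h)
    simpa only [IsAscending, leftTrace_true_cons, rightTrace_true_cons,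
      mediantTrace_true_cons hT, max_comm, mul_comm] using this

lemma max_le_of_not_isAscending {w : List Bool} (h : ¬ IsAscending T w) :
    max (leftTrace T w) (rightTrace T w) ≤ max a b := by
  induction w with
  | nil => rw [leftTrace_nil hT, rightTrace_nil hT]
  | cons d w ih =>
    have hw : ¬ IsAscending T w := fun hw => h (hw.cons habc hT d).1
    have hZ : mediantTrace T w ≤ max a b := ((not_le.1 hw).trans_le (ih hw)).le
    rw [max_le_iff] at ih ⊢
    cases d
    · exact ⟨(ih hw).1, hZ⟩
    · exact ⟨hZ, (ih hw).2⟩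

lemma finite_not_isAscending : {w | ¬ IsAscending T w}.Finite := by
  have hpos : 0 < mcshaneTerm (max a b) := mcshaneTerm_pos (by linarith [le_max_left a b, habc.1])
  refine ((summable_mcshaneTerm habc hT).tendsto_cofinite_zero.eventually
    (gt_mem_nhds hpos)).subset fun w hw => ?_
  exact not_lt.2 (mcshaneTerm_le_mcshaneTerm (by linarith [(isMarkoffTriple_traces habc hT w).3])
    (((not_le.1 hw).trans_le (max_le_of_not_isAscending habc hT hw)).le))

/-- Deep mediant traces are the larger root of their Markoff equation. -/
lemma exists_forall_mul_le_two_mul_mediantTrace :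
    ∃ N, ∀ w : List Bool, N < w.length →
      leftTrace T w * rightTrace T w ≤ 2 * mediantTrace T w := by
  obtain ⟨N, hN⟩ := ((finite_not_isAscending habc hT).image List.length).bddAbove
  refine ⟨N + 1, fun w hw => ?_⟩
  obtain ⟨d, w, rfl⟩ := w.exists_cons_of_length_pos (by omega)
  have hasc : IsAscending T w := by
    by_contra h
    have := hN ⟨w, h, rfl⟩
    simp only [List.length_cons] at hw
    omega
  exact (hasc.cons habc hT d).2

/-- The traces stay away from `2` because
`mcshaneTerm (mediantTrace T w) ≤ treeWeight T [] < 1`. -/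
lemma exists_pos_le_sqrt : ∃ m > 0, ∀ w,
    m ≤ √(1 - 4 / leftTrace T w ^ 2) ∧ m ≤ √(1 - 4 / rightTrace T w ^ 2) := by
  have hsqrt {t : ℝ} (ht : 2 < t) : 0 < √(1 - 4 / t ^ 2) := by
    rw [Real.sqrt_pos, sub_pos, div_lt_one (by positivity)]
    nlinarith
  have hE : treeWeight T [] < 1 := by
    have h := isMarkoffTriple_traces habc hT []
    exact edgeWeight_lt_one (by linarith [h.1]) (by linarith [h.2]) (by linarith [h.3])
  refine ⟨min (min (√(1 - 4 / a ^ 2)) (√(1 - 4 / b ^ 2))) (1 - treeWeight T []),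
    lt_min (lt_min (hsqrt habc.1) (hsqrt habc.2)) (by linarith),
    forall_traces_of_forall_mediantTrace hT (P := fun t => _ ≤ √(1 - 4 / t ^ 2))
      ((min_le_left _ _).trans (min_le_left _ _)) ((min_le_left _ _).trans (min_le_right _ _))
      fun w => (min_le_right _ _).trans ?_⟩
  have := sum_mcshaneTerm_le habc hT {w}
  rw [Finset.sum_singleton, mcshaneTerm] at this
  linarith

lemma tendsto_sum_level_treeWeight :
    Tendsto (fun n => ∑ w ∈ level n, treeWeight T w) atTop (𝓝 0) := by
  obtain ⟨N, hN⟩ := exists_forall_mul_le_two_mul_mediantTrace habc hT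
  obtain ⟨m, hm, hmw⟩ := exists_pos_le_sqrt habc hT
  have hle : ∀ n > N, ∑ w ∈ level n, treeWeight T w ≤
      4 / m ^ 2 * ∑ w ∈ level n, mcshaneTerm (mediantTrace T w) := fun n hn => by
    rw [Finset.mul_sum]
    refine Finset.sum_le_sum fun w hw => ?_
    have hM := isMarkoffTriple_traces habc hT w
    have h := hM.edgeWeight_mul_le (hN w (mem_level.1 hw ▸ hn))
    rw [div_mul_eq_mul_div, le_div_iff₀ (by positivity)]
    calc treeWeight T w * m ^ 2 ≤ treeWeight T w * (√(1 - 4 / leftTrace T w ^ 2) *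
          √(1 - 4 / rightTrace T w ^ 2)) := by
          rw [sq]
          exact mul_le_mul_of_nonneg_left (mul_le_mul (hmw w).1 (hmw w).2 hm.le
            (Real.sqrt_nonneg _)) hM.edgeWeight_nonneg
      _ ≤ 4 * mcshaneTerm (mediantTrace T w) := h
  refine squeeze_zero' (Eventually.of_forall fun n => Finset.sum_nonneg fun w _ =>
    (isMarkoffTriple_traces habc hT w).edgeWeight_nonneg) (eventually_gt_atTop N |>.mono hle) ?_
  simpa using (tendsto_sum_level (summable_mcshaneTerm habc hT)).const_mul (4 / m ^ 2)

theorem hasSum_mcshaneTerm :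
    HasSum (fun w => mcshaneTerm (mediantTrace T w)) (treeWeight T []) := by
  have hsum := summable_mcshaneTerm habc hT
  have hlim : Tendsto (fun n => ∑ w ∈ shorter n, mcshaneTerm (mediantTrace T w)) atTop
      (𝓝 (treeWeight T [])) := by
    have h := (tendsto_const_nhds (x := treeWeight T [])).sub
      (tendsto_sum_level_treeWeight habc hT)
    rw [sub_zero] at h
    exact h.congr fun n => (eq_sub_of_add_eq (treeWeight_nil_eq_sum habc hT n).symm).symm
  rw [← tendsto_nhds_unique (tendsto_sum_shorter hsum) hlim]
  exact hsum.hasSum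

end Sums

end

end McShane

/-- For a Markoff triple of reals `(a,b,c)` with trace function `T`, the sum over all
coprime pairs `(p,q)` with `0 < p < q` of `1 − √(1 − 4/T(p,q)²)` converges to
`c/(ab) − (1−√(1−4/a²))/2 − (1−√(1−4/b²))/2`. -/
theorem partial_mcshane_identity (a b c : ℝ) (ha : 2 < a) (hb : 2 < b) (hc : 2 < c)
    (habc : a ^ 2 + b ^ 2 + c ^ 2 = a * b * c)
    (T : ℤ × ℤ → ℝ) (hT : IsTraceFunction a b c T) :
    HasSum
      (fun v : {v : ℤ × ℤ // 0 < v.1 ∧ v.1 < v.2 ∧ IsCoprime v.1 v.2} =>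
        1 - Real.sqrt (1 - 4 / T v.val ^ 2))
      (c / (a * b) - (1 - Real.sqrt (1 - 4 / a ^ 2)) / 2
        - (1 - Real.sqrt (1 - 4 / b ^ 2)) / 2) := by
  have h := McShane.hasSum_mcshaneTerm ⟨ha, hb, hc, habc⟩ hT
  rw [McShane.treeWeight_nil hT (mul_pos (by linarith) (by linarith)).ne'] at h
  exact McShane.mediantEquiv.hasSum_iff.1 h
end

section
/- Let (a,b,c) be a Markoff triple of reals and T a trace function for (a,b,c). Then T(v) > 2 for every primitive vector v of ℤ². -/
/-- Both members of a unimodular pair are primitive. -/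
lemma prim_of_det {v w : ℤ × ℤ}
    (hd : v.1 * w.2 - v.2 * w.1 = 1 ∨ v.1 * w.2 - v.2 * w.1 = -1) :
    Primitive v ∧ Primitive w := by
  constructor
  · rcases hd with h | h
    · exact ⟨w.2, -w.1, by linear_combination h⟩
    · exact ⟨-w.2, w.1, by linear_combination -h⟩
  · rcases hd with h | h
    · exact ⟨-v.2, v.1, by linear_combination h⟩
    · exact ⟨v.2, -v.1, by linear_combination -h⟩

/-- Vieta mutation of a real Markoff triple with entries `> 2`. -/
lemma markoff_mutation {x y z : ℝ} (hx : 2 < x) (hy : 2 < y) (hz : 2 < z)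
    (h : x^2 + y^2 + z^2 = x*y*z) :
    2 < x*y - z ∧ x^2 + y^2 + (x*y - z)^2 = x*y*(x*y - z) :=
  ⟨by nlinarith [sq_nonneg (x - y), sq_nonneg (x + y),
      mul_pos (show (0:ℝ) < x by linarith) (show (0:ℝ) < y by linarith)],
   by linear_combination h⟩

/-- The Markoff property of a unimodular pair. -/
def MGood (T : ℤ × ℤ → ℝ) (v w : ℤ × ℤ) : Prop :=
  2 < T v ∧ 2 < T w ∧ 2 < T (v + w) ∧
    (T v)^2 + (T w)^2 + (T (v + w))^2 = T v * T w * T (v + w)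

lemma rot1 {a b c : ℝ} {T : ℤ × ℤ → ℝ} (hT : IsTraceFunction a b c T) {v w : ℤ × ℤ}
    (hd : v.1 * w.2 - v.2 * w.1 = 1 ∨ v.1 * w.2 - v.2 * w.1 = -1)
    (h : MGood T (-w) (v + w)) : MGood T v w := by
  obtain ⟨h1, h2, h3, h4⟩ := h
  have hnw : T (-w) = T w := hT.neg_eq w (prim_of_det hd).2
  have hv : -w + (v + w) = v := by abel
  rw [hv] at h3 h4
  rw [hnw] at h1 h4
  exact ⟨h3, h1, h2, by linear_combination h4⟩

lemma rot2 {a b c : ℝ} {T : ℤ × ℤ → ℝ} (hT : IsTraceFunction a b c T) {v w : ℤ × ℤ}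
    (hd : v.1 * w.2 - v.2 * w.1 = 1 ∨ v.1 * w.2 - v.2 * w.1 = -1)
    (h : MGood T (v + w) (-v)) : MGood T v w := by
  obtain ⟨h1, h2, h3, h4⟩ := h
  have hnv : T (-v) = T v := hT.neg_eq v (prim_of_det hd).1
  have hw : v + w + -v = w := by abel
  rw [hw] at h3 h4
  rw [hnv] at h2 h4
  exact ⟨h2, h3, h1, by linear_combination h4⟩

lemma mut_left {a b c : ℝ} {T : ℤ × ℤ → ℝ} (hT : IsTraceFunction a b c T) {v w : ℤ × ℤ}
    (hd : v.1 * w.2 - v.2 * w.1 = 1 ∨ v.1 * w.2 - v.2 * w.1 = -1)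
    (h : MGood T (v - w) w) : MGood T v w := by
  obtain ⟨h1, h2, h3, h4⟩ := h
  have hvw : v - w + w = v := by abel
  rw [hvw] at h3 h4
  have hadd := hT.add_rule v w (prim_of_det hd).1 (prim_of_det hd).2 hd
  have hmut := markoff_mutation h3 h2 h1 (by linear_combination h4)
  rw [← hadd] at hmut
  exact ⟨h3, h2, hmut.1, by linear_combination hmut.2⟩

lemma mut_right {a b c : ℝ} {T : ℤ × ℤ → ℝ} (hT : IsTraceFunction a b c T) {v w : ℤ × ℤ}
    (hd : v.1 * w.2 - v.2 * w.1 = 1 ∨ v.1 * w.2 - v.2 * w.1 = -1)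
    (h : MGood T v (w - v)) : MGood T v w := by
  obtain ⟨h1, h2, h3, h4⟩ := h
  have hvw : v + (w - v) = w := by abel
  rw [hvw] at h3 h4
  have e : v.1 * (w - v).2 - v.2 * (w - v).1 = v.1 * w.2 - v.2 * w.1 := by
    simp only [Prod.fst_sub, Prod.snd_sub]; ring
  have hd2 : v.1 * (w - v).2 - v.2 * (w - v).1 = 1 ∨
      v.1 * (w - v).2 - v.2 * (w - v).1 = -1 := by rw [e]; exact hd
  have hprim : Primitive (w - v) := (prim_of_det hd2).2
  have hneg : v - w = -(w - v) := by abel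
  have hadd := hT.add_rule v w (prim_of_det hd).1 (prim_of_det hd).2 hd
  rw [hneg, hT.neg_eq _ hprim] at hadd
  have hmut := markoff_mutation h1 h3 h2 (by linear_combination h4)
  rw [← hadd] at hmut
  exact ⟨h1, h3, hmut.1, by linear_combination hmut.2⟩

lemma norm_ge_one {p q r s : ℤ} (hd : p*s - q*r = 1 ∨ p*s - q*r = -1) :
    1 ≤ p^2 + q^2 ∧ 1 ≤ r^2 + s^2 := by
  constructor
  · by_contra hcon
    push_neg at hcon
    have hp : p = 0 := by nlinarith [sq_nonneg p, sq_nonneg q]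
    have hq : q = 0 := by nlinarith [sq_nonneg p, sq_nonneg q]
    subst hp; subst hq; simp at hd
  · by_contra hcon
    push_neg at hcon
    have hr : r = 0 := by nlinarith [sq_nonneg r, sq_nonneg s]
    have hs : s = 0 := by nlinarith [sq_nonneg r, sq_nonneg s]
    subst hr; subst hs; simp at hd

/-- The Euclidean reduction step: if `det = ±1` and the second vector is the larger one
(with norm ≥ 2), then adding or subtracting the first strictly reduces it. -/
lemma reduce (p q r s : ℤ) (hd : p*s - q*r = 1 ∨ p*s - q*r = -1)
    (hle : p^2 + q^2 ≤ r^2 + s^2) (h2 : 2 ≤ r^2 + s^2) :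
    (p+r)^2 + (q+s)^2 < r^2 + s^2 ∨ (p-r)^2 + (q-s)^2 < r^2 + s^2 := by
  have hd2 : (p*s - q*r)^2 = 1 := by rcases hd with h | h <;> rw [h] <;> ring
  have key : (p*r + q*s)^2 = (p^2+q^2) * (r^2+s^2) - 1 := by linear_combination -hd2
  have hnv : 1 ≤ p^2 + q^2 := (norm_ge_one hd).1
  have hsq : (p^2+q^2)^2 < 4 * (p*r + q*s)^2 := by nlinarith [key, hnv, hle, h2]
  rcases le_or_gt 0 (p*r + q*s) with ht | ht
  · right
    have : p^2 + q^2 < 2 * (p*r + q*s) := by nlinarith [hsq, hnv]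
    nlinarith [this]
  · left
    have : p^2 + q^2 < -(2 * (p*r + q*s)) := by nlinarith [hsq, hnv]
    nlinarith [this]

set_option maxHeartbeats 1600000 in
lemma good_main (a b c : ℝ) (ha : 2 < a) (hb : 2 < b) (hc : 2 < c)
    (habc : a ^ 2 + b ^ 2 + c ^ 2 = a * b * c)
    (T : ℤ × ℤ → ℝ) (hT : IsTraceFunction a b c T) (n : ℕ) :
    ∀ v w : ℤ × ℤ, v.1^2 + v.2^2 + w.1^2 + w.2^2 < (n : ℤ) →
      (v.1 * w.2 - v.2 * w.1 = 1 ∨ v.1 * w.2 - v.2 * w.1 = -1) →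
      MGood T v w := by
  induction n using Nat.strong_induction_on with
  | _ n ih =>
  intro v w hm hd
  by_cases hsm : v.1^2 + v.2^2 ≤ 1 ∧ w.1^2 + w.2^2 ≤ 1
  · -- base case: both unit vectors
    have hp01 : Primitive ((0:ℤ), (1:ℤ)) := ⟨0, 1, by ring⟩
    have hp10 : Primitive ((1:ℤ), (0:ℤ)) := ⟨1, 0, by ring⟩
    have hp11 : Primitive ((1:ℤ), (1:ℤ)) := ⟨1, 0, by ring⟩
    have hp0m1 : Primitive ((0:ℤ), (-1:ℤ)) := ⟨0, -1, by ring⟩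
    have hp1m1 : Primitive ((1:ℤ), (-1:ℤ)) := ⟨1, 0, by ring⟩
    have hTm01 : T (0, -1) = a := by
      have := hT.neg_eq (0, 1) hp01
      rw [show (-(0,1) : ℤ × ℤ) = (0, -1) by decide] at this
      rw [this, hT.map_01]
    have hTm10 : T (-1, 0) = c := by
      have := hT.neg_eq (1, 0) hp10
      rw [show (-(1,0) : ℤ × ℤ) = (-1, 0) by decide] at this
      rw [this, hT.map_10]
    have hTm1m1 : T (-1, -1) = b := by
      have := hT.neg_eq (1, 1) hp11
      rw [show (-(1,1) : ℤ × ℤ) = (-1, -1) by decide] at this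
      rw [this, hT.map_11]
    have hT1m1 : T (1, -1) = c * a - b := by
      have h := hT.add_rule (1, 0) (0, -1) hp10 hp0m1 (by norm_num)
      rw [show ((1,0) + (0,-1) : ℤ × ℤ) = (1, -1) by decide,
          show ((1,0) - (0,-1) : ℤ × ℤ) = (1, 1) by decide,
          hT.map_10, hTm01, hT.map_11] at h
      exact h
    have hTm11 : T (-1, 1) = c * a - b := by
      have := hT.neg_eq (1, -1) hp1m1
      rw [show (-(1,-1) : ℤ × ℤ) = (-1, 1) by decide] at this
      rw [this, hT1m1]
    have hmut := markoff_mutation hc ha hb (show c^2+a^2+b^2 = c*a*b by linear_combination habc)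
    have hTone : T 1 = b := hT.map_11
    have hTnegone : T (-1) = b := hTm1m1
    obtain ⟨p, q⟩ := v
    obtain ⟨r, s⟩ := w
    simp only at hd hm hsm
    have hb1 : -1 ≤ p := by nlinarith [hsm.1, sq_nonneg q]
    have hb2 : p ≤ 1 := by nlinarith [hsm.1, sq_nonneg q]
    have hb3 : -1 ≤ q := by nlinarith [hsm.1, sq_nonneg p]
    have hb4 : q ≤ 1 := by nlinarith [hsm.1, sq_nonneg p]
    have hb5 : -1 ≤ r := by nlinarith [hsm.2, sq_nonneg s]
    have hb6 : r ≤ 1 := by nlinarith [hsm.2, sq_nonneg s]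
    have hb7 : -1 ≤ s := by nlinarith [hsm.2, sq_nonneg r]
    have hb8 : s ≤ 1 := by nlinarith [hsm.2, sq_nonneg r]
    interval_cases p <;> interval_cases q <;> interval_cases r <;> interval_cases s <;>
      first
        | (exfalso; revert hsm; norm_num; done)
        | (exfalso; revert hd; norm_num; done)
        | (refine ⟨?_, ?_, ?_, ?_⟩ <;>
            norm_num [Prod.mk_add_mk, hT.map_01, hT.map_10, hT.map_11, hTm01, hTm10,
              hTm1m1, hT1m1, hTm11, hTone, hTnegone] <;>
            first
              | linarith [hmut.1]
              | linear_combination habc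
              | linear_combination hmut.2)
  · -- inductive step
    have hnorm := norm_ge_one hd
    have h0 : (0:ℤ) ≤ v.1^2 + v.2^2 + w.1^2 + w.2^2 := by positivity
    have hn0 : 1 ≤ n := by
      have : (0:ℤ) < (n:ℤ) := lt_of_le_of_lt h0 hm
      exact_mod_cast this
    have hcast : ((n-1 : ℕ) : ℤ) = (n:ℤ) - 1 := by
      push_cast [Nat.cast_sub hn0]; ring
    have hlt_n : n - 1 < n := by omega
    rcases le_or_gt (v.1^2 + v.2^2) (w.1^2 + w.2^2) with hle | hlt
    · have h2 : 2 ≤ w.1^2 + w.2^2 := by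
        rcases le_or_gt (w.1^2 + w.2^2) 1 with h | h
        · exact absurd ⟨le_trans hle h, h⟩ hsm
        · exact h
      rcases reduce v.1 v.2 w.1 w.2 hd hle h2 with hr | hr
      · -- |v+w|² < |w|² : use pair (v+w, -v)
        apply rot2 hT hd
        refine ih (n-1) hlt_n (v+w) (-v) ?_ ?_
        · simp only [Prod.fst_add, Prod.snd_add, Prod.fst_neg, Prod.snd_neg, hcast]
          nlinarith [hr, hm]
        · have e : (v+w).1 * (-v).2 - (v+w).2 * (-v).1 = v.1 * w.2 - v.2 * w.1 := by
            simp only [Prod.fst_add, Prod.snd_add, Prod.fst_neg, Prod.snd_neg]; ring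
          rw [e]; exact hd
      · -- |v-w|² < |w|² : use pair (v, w-v)
        apply mut_right hT hd
        refine ih (n-1) hlt_n v (w-v) ?_ ?_
        · simp only [Prod.fst_sub, Prod.snd_sub, hcast]
          nlinarith [hr, hm]
        · have e : v.1 * (w-v).2 - v.2 * (w-v).1 = v.1 * w.2 - v.2 * w.1 := by
            simp only [Prod.fst_sub, Prod.snd_sub]; ring
          rw [e]; exact hd
    · have h2 : 2 ≤ v.1^2 + v.2^2 := by linarith [hnorm.2, hlt]
      have hd' : w.1 * v.2 - w.2 * v.1 = 1 ∨ w.1 * v.2 - w.2 * v.1 = -1 := by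
        rcases hd with h | h
        · right; linear_combination -h
        · left; linear_combination -h
      rcases reduce w.1 w.2 v.1 v.2 hd' (le_of_lt hlt) h2 with hr | hr
      · -- |v+w|² < |v|² : use pair (-w, v+w)
        apply rot1 hT hd
        refine ih (n-1) hlt_n (-w) (v+w) ?_ ?_
        · simp only [Prod.fst_add, Prod.snd_add, Prod.fst_neg, Prod.snd_neg, hcast]
          nlinarith [hr, hm]
        · have e : (-w).1 * (v+w).2 - (-w).2 * (v+w).1 = v.1 * w.2 - v.2 * w.1 := by
            simp only [Prod.fst_add, Prod.snd_add, Prod.fst_neg, Prod.snd_neg]; ring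
          rw [e]; exact hd
      · -- |v-w|² < |v|² : use pair (v-w, w)
        apply mut_left hT hd
        refine ih (n-1) hlt_n (v-w) w ?_ ?_
        · simp only [Prod.fst_sub, Prod.snd_sub, hcast]
          nlinarith [hr, hm]
        · have e : (v-w).1 * w.2 - (v-w).2 * w.1 = v.1 * w.2 - v.2 * w.1 := by
            simp only [Prod.fst_sub, Prod.snd_sub]; ring
          rw [e]; exact hd

/-- If `(a,b,c)` is a Markoff triple of reals and `T` is a trace function for `(a,b,c)`,
then `T(v) > 2` for every primitive vector `v` of `ℤ²`. -/
theorem trace_function_gt_two (a b c : ℝ) (ha : 2 < a) (hb : 2 < b) (hc : 2 < c)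
    (habc : a ^ 2 + b ^ 2 + c ^ 2 = a * b * c)
    (T : ℤ × ℤ → ℝ) (hT : IsTraceFunction a b c T) :
    ∀ v : ℤ × ℤ, Primitive v → 2 < T v := by
  intro v hv
  obtain ⟨x, y, hxy⟩ := hv
  have hd : v.1 * x - v.2 * (-y) = 1 := by linear_combination hxy
  have h0 : (0:ℤ) ≤ v.1^2 + v.2^2 + (-y)^2 + x^2 := by positivity
  have hmb : v.1^2 + v.2^2 + (-y)^2 + x^2 <
      (((v.1^2 + v.2^2 + (-y)^2 + x^2).toNat + 1 : ℕ) : ℤ) := by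
    push_cast
    rw [Int.toNat_of_nonneg h0]
    linarith
  exact (good_main a b c ha hb hc habc T hT _ v (-y, x) hmb (Or.inl hd)).1
end

section
/- Let (a,b,c) be a Markoff triple of reals and T a trace function for (a,b,c). Then for every pair of primitive vectors v, w of ℤ² with det(v,w) = ±1, the triple (T(v), T(w), T(v+w)) satisfies the Markoff equation: T(v)² + T(w)² + T(v+w)² = T(v)·T(w)·T(v+w). -/
/-!
The Markoff defect `x² + y² + z² - xyz` of the triple `(T v, T w, T (v + w))` vanishes on the
standard basis `((1,0), (0,1))` because `(a,b,c)` is a Markoff triple. Replacing the basis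
`(v, w)` by `(w, -v)` or `(v, v + w)` (right multiplication by the generators `S`, `T` of
`SL(2, ℤ)`) permutes the triple up to one Vieta involution `z ↦ xy - z`, which the recursion
`T (v + w) = T v * T w - T (v - w)` realises, so the defect is unchanged. As `SL(2, ℤ)` acts
transitively on bases of determinant `1`, the defect vanishes on all of them; swapping `v` and
`w` handles determinant `-1`.
-/

open MatrixGroups

def markoffForm (x y z : ℝ) : ℝ := x ^ 2 + y ^ 2 + z ^ 2 - x * y * z

theorem markoffForm_vieta (x y z : ℝ) : markoffForm x y (x * y - z) = markoffForm x y z := by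
  unfold markoffForm; ring

def IsUnimodular (v w : ℤ × ℤ) : Prop :=
  v.1 * w.2 - v.2 * w.1 = 1 ∨ v.1 * w.2 - v.2 * w.1 = -1

namespace IsUnimodular

variable {v w : ℤ × ℤ}

theorem primitive_left (h : IsUnimodular v w) : Primitive v := by
  rcases h with h | h
  · exact ⟨w.2, -w.1, by linear_combination h⟩
  · exact ⟨-w.2, w.1, by linear_combination -h⟩

theorem symm (h : IsUnimodular v w) : IsUnimodular w v := by
  rcases h with h | h
  · exact .inr (by linear_combination -h)
  · exact .inl (by linear_combination -h)

theorem primitive_right (h : IsUnimodular v w) : Primitive w :=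
  h.symm.primitive_left

theorem add_left (h : IsUnimodular v w) : IsUnimodular (v + w) w := by
  rcases h with h | h
  · exact .inl (by simp only [Prod.fst_add, Prod.snd_add]; linear_combination h)
  · exact .inr (by simp only [Prod.fst_add, Prod.snd_add]; linear_combination h)

end IsUnimodular

namespace SL2Z

open ModularGroup

def col (g : SL(2, ℤ)) (j : Fin 2) : ℤ × ℤ := (g 0 j, g 1 j)

theorem isUnimodular_col (g : SL(2, ℤ)) : IsUnimodular (col g 0) (col g 1) := by
  have hdet := g.det_coe
  rw [Matrix.det_fin_two] at hdet
  exact .inl (by simp only [col]; linear_combination hdet)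

theorem exists_col_eq {v w : ℤ × ℤ} (h : v.1 * w.2 - v.2 * w.1 = 1) :
    ∃ g : SL(2, ℤ), col g 0 = v ∧ col g 1 = w :=
  ⟨⟨!![v.1, w.1; v.2, w.2], by rw [Matrix.det_fin_two_of]; linear_combination h⟩, rfl, rfl⟩

theorem col_one_zero : col 1 0 = (1, 0) := rfl

theorem col_one_one : col 1 1 = (0, 1) := rfl

theorem col_mul_S_zero (g : SL(2, ℤ)) : col (g * S) 0 = col g 1 := by
  simp [col, coe_S, Matrix.mul_apply, Fin.sum_univ_two]

theorem col_mul_S_one (g : SL(2, ℤ)) : col (g * S) 1 = -col g 0 := by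
  simp [col, coe_S, Matrix.mul_apply, Fin.sum_univ_two]

theorem col_mul_T_zero (g : SL(2, ℤ)) : col (g * T) 0 = col g 0 := by
  simp [col, coe_T, Matrix.mul_apply, Fin.sum_univ_two]

theorem col_mul_T_one (g : SL(2, ℤ)) : col (g * T) 1 = col g 0 + col g 1 := by
  simp [col, coe_T, Matrix.mul_apply, Fin.sum_univ_two]

end SL2Z

def markoffDefect (T : ℤ × ℤ → ℝ) (v w : ℤ × ℤ) : ℝ := markoffForm (T v) (T w) (T (v + w))

theorem markoffDefect_swap (T : ℤ × ℤ → ℝ) (v w : ℤ × ℤ) :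
    markoffDefect T w v = markoffDefect T v w := by
  unfold markoffDefect markoffForm; rw [add_comm w v]; ring

namespace IsTraceFunction

variable {a b c : ℝ} {T : ℤ × ℤ → ℝ}

theorem map_add_of_isUnimodular (hT : IsTraceFunction a b c T) {v w : ℤ × ℤ}
    (h : IsUnimodular v w) : T (v + w) = T v * T w - T (v - w) :=
  hT.add_rule v w h.primitive_left h.primitive_right h


theorem markoffDefect_add_right (hT : IsTraceFunction a b c T) {v w : ℤ × ℤ}
    (h : IsUnimodular v w) :
    markoffDefect T v (v + w) = markoffDefect T v w := by
  have hadd := hT.map_add_of_isUnimodular h.symm.add_left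
  rw [add_comm w v, add_sub_cancel_left, add_comm (v + w), mul_comm] at hadd
  rw [markoffDefect, hadd, markoffForm_vieta]
  unfold markoffDefect markoffForm; ring

theorem markoffDefect_neg_left (hT : IsTraceFunction a b c T) {v w : ℤ × ℤ}
    (h : IsUnimodular v w) :
    markoffDefect T w (-v) = markoffDefect T v w := by
  have hsub : T (w - v) = T w * T v - T (w + v) := by
    rw [hT.map_add_of_isUnimodular h.symm]; ring
  rw [markoffDefect, hT.neg_eq v h.primitive_left, ← sub_eq_add_neg, hsub, markoffForm_vieta]
  unfold markoffDefect markoffForm; rw [add_comm w v]; ring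

theorem markoffDefect_col_mul_generator (hT : IsTraceFunction a b c T) (g : SL(2, ℤ))
    {s : SL(2, ℤ)} (hs : s ∈ ({ModularGroup.S, ModularGroup.T} : Set SL(2, ℤ))) :
    markoffDefect T (SL2Z.col (g * s) 0) (SL2Z.col (g * s) 1) =
      markoffDefect T (SL2Z.col g 0) (SL2Z.col g 1) := by
  rcases hs with rfl | rfl
  · rw [SL2Z.col_mul_S_zero, SL2Z.col_mul_S_one,
      hT.markoffDefect_neg_left (SL2Z.isUnimodular_col g)]
  · rw [SL2Z.col_mul_T_zero, SL2Z.col_mul_T_one,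
      hT.markoffDefect_add_right (SL2Z.isUnimodular_col g)]

theorem markoffDefect_col_mul (hT : IsTraceFunction a b c T) (g h : SL(2, ℤ)) :
    markoffDefect T (SL2Z.col (g * h) 0) (SL2Z.col (g * h) 1) =
      markoffDefect T (SL2Z.col g 0) (SL2Z.col g 1) := by
  have hh : h ∈ Subgroup.closure {ModularGroup.S, ModularGroup.T} :=
    SpecialLinearGroup.SL2Z_generators ▸ Subgroup.mem_top h
  induction hh using Subgroup.closure_induction_right with
  | one => rw [mul_one]
  | mul_right x _ s hs ih => rw [← mul_assoc, hT.markoffDefect_col_mul_generator _ hs, ih]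
  | mul_inv_cancel x _ s hs ih =>
    rw [← hT.markoffDefect_col_mul_generator _ hs, mul_assoc, inv_mul_cancel_right, ih]

theorem markoffDefect_col_eq_zero (hT : IsTraceFunction a b c T)
    (habc : a ^ 2 + b ^ 2 + c ^ 2 = a * b * c) (g : SL(2, ℤ)) :
    markoffDefect T (SL2Z.col g 0) (SL2Z.col g 1) = 0 := by
  rw [← one_mul g, hT.markoffDefect_col_mul, SL2Z.col_one_zero, SL2Z.col_one_one, markoffDefect,
    Prod.mk_add_mk, zero_add, add_zero, hT.map_10, hT.map_01, hT.map_11, markoffForm]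
  linear_combination habc

theorem markoffDefect_eq_zero (hT : IsTraceFunction a b c T)
    (habc : a ^ 2 + b ^ 2 + c ^ 2 = a * b * c) {v w : ℤ × ℤ} (h : IsUnimodular v w) :
    markoffDefect T v w = 0 := by
  wlog h1 : v.1 * w.2 - v.2 * w.1 = 1 generalizing v w
  · rw [← markoffDefect_swap]
    exact this h.symm (by linear_combination -h.resolve_left h1)
  obtain ⟨g, rfl, rfl⟩ := SL2Z.exists_col_eq h1
  exact hT.markoffDefect_col_eq_zero habc g

end IsTraceFunction

theorem trace_function_markoff_equation_general (a b c : ℝ)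
    (habc : a ^ 2 + b ^ 2 + c ^ 2 = a * b * c)
    (T : ℤ × ℤ → ℝ) (hT : IsTraceFunction a b c T) :
    ∀ v w : ℤ × ℤ, Primitive v → Primitive w →
      (v.1 * w.2 - v.2 * w.1 = 1 ∨ v.1 * w.2 - v.2 * w.1 = -1) →
      T v ^ 2 + T w ^ 2 + T (v + w) ^ 2 = T v * T w * T (v + w) := by
  intro v w _ _ hvw
  have hdefect := hT.markoffDefect_eq_zero habc hvw
  rw [markoffDefect, markoffForm] at hdefect
  linear_combination hdefect

/-- If `(a,b,c)` is a Markoff triple of reals and `T` is a trace function for `(a,b,c)`,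
then for primitive `v, w` with `det(v,w) = ±1`, the triple `(T v, T w, T (v+w))`
satisfies the Markoff equation. -/
theorem trace_function_markoff_equation (a b c : ℝ) (ha : 2 < a) (hb : 2 < b) (hc : 2 < c)
    (habc : a ^ 2 + b ^ 2 + c ^ 2 = a * b * c)
    (T : ℤ × ℤ → ℝ) (hT : IsTraceFunction a b c T) :
    ∀ v w : ℤ × ℤ, Primitive v → Primitive w →
      (v.1 * w.2 - v.2 * w.1 = 1 ∨ v.1 * w.2 - v.2 * w.1 = -1) →
      T v ^ 2 + T w ^ 2 + T (v + w) ^ 2 = T v * T w * T (v + w) :=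
  trace_function_markoff_equation_general a b c habc T hT
end
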